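/- arXiv:2601.22079 — 10 statements merged into one kernel-verified Lean document; each statement's English description precedes it below -/
import Mathlib

section
/- For any sequence of payoff vectors u^1, …, u^n with entries in [0,h] and any learning rate ε ∈ (0,1], the Exponential Weights algorithm satisfies E[EW] ≥ (1 − ε)·OPT − (h/ε)·ln k, where E[EW] = Σ_{i=1}^n α^i · u^i is its expected total payoff and OPT = max_a Σ_{i=1}^n u^i_a. -/
/-!
The potential `Φₘ = ∑ₐ (1+ε)^(Uₘₐ/h)` starts at `k`. Bernoulli's inequality
`(1+ε)^x ≤ 1 + εx` for `x ∈ [0,1]` gives `Φₘ₊₁ ≤ Φₘ (1 + ε pₘ / h) ≤ Φₘ exp(ε pₘ / h)`,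
where `pₘ` is the expected payoff of round `m`, so `Φₙ ≤ k exp(ε E[EW] / h)`. On the other hand
`Φₙ ≥ (1+ε)^(OPT/h)`. Taking logarithms and using `log(1+ε) ≥ ε - ε²` yields the bound.
-/

open Finset Real

namespace ExponentialWeights

noncomputable section

variable {ι : Type*} [Fintype ι] (ε h : ℝ) (u : ℕ → ι → ℝ)

def cumPayoff (m : ℕ) (a : ι) : ℝ := ∑ i ∈ range m, u i a

def potential (m : ℕ) : ℝ := ∑ a, (1 + ε) ^ (cumPayoff u m a / h)

/-- Rounds are numbered from `0`: `weight ε h u m` is the distribution played in round `m`,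
built from the payoffs of rounds `0, …, m - 1`. -/
def weight (m : ℕ) (a : ι) : ℝ := (1 + ε) ^ (cumPayoff u m a / h) / potential ε h u m

def expectedPayoff (m : ℕ) : ℝ := ∑ a, weight ε h u m a * u m a

variable {ε h u}

lemma potential_zero : potential ε h u 0 = Fintype.card ι := by
  simp [potential, cumPayoff]

lemma potential_pos [Nonempty ι] (hε : 0 ≤ ε) (m : ℕ) : 0 < potential ε h u m :=
  sum_pos (fun a _ => rpow_pos_of_pos (by linarith) _) univ_nonempty

lemma rpow_cumPayoff_le_potential (hε : 0 ≤ ε) (m : ℕ) (a : ι) :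
    (1 + ε) ^ (cumPayoff u m a / h) ≤ potential ε h u m :=
  single_le_sum (f := fun a => (1 + ε) ^ (cumPayoff u m a / h))
    (fun b _ => rpow_nonneg (by linarith) _) (mem_univ a)

lemma potential_mul_expectedPayoff [Nonempty ι] (hε : 0 ≤ ε) (m : ℕ) :
    potential ε h u m * expectedPayoff ε h u m
      = ∑ a, (1 + ε) ^ (cumPayoff u m a / h) * u m a := by
  have hΦ := (potential_pos (h := h) (u := u) hε m).ne'
  simp only [expectedPayoff, weight, mul_sum]
  exact sum_congr rfl fun a _ => by field_simp

lemma potential_succ_le [Nonempty ι] (hε : 0 ≤ ε) (hh : 0 < h) {m : ℕ}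
    (hu : ∀ a, u m a ∈ Set.Icc 0 h) :
    potential ε h u (m + 1) ≤ potential ε h u m * exp (ε / h * expectedPayoff ε h u m) := by
  have bernoulli (a : ι) : (1 + ε) ^ (u m a / h) ≤ 1 + u m a / h * ε :=
    rpow_one_add_le_one_add_mul_self (by linarith) (div_nonneg (hu a).1 hh.le)
      ((div_le_one hh).mpr (hu a).2)
  calc potential ε h u (m + 1)
      = ∑ a, (1 + ε) ^ (cumPayoff u m a / h) * (1 + ε) ^ (u m a / h) := by
        simp only [potential, cumPayoff, sum_range_succ, add_div,
          rpow_add (by linarith : 0 < 1 + ε)]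
    _ ≤ ∑ a, (1 + ε) ^ (cumPayoff u m a / h) * (1 + u m a / h * ε) :=
        sum_le_sum fun a _ =>
          mul_le_mul_of_nonneg_left (bernoulli a) (rpow_nonneg (by linarith) _)
    _ = potential ε h u m * (1 + ε / h * expectedPayoff ε h u m) := by
        rw [mul_add, mul_one, mul_left_comm, potential_mul_expectedPayoff hε, mul_sum,
          potential, ← sum_add_distrib]
        exact sum_congr rfl fun a _ => by ring
    _ ≤ potential ε h u m * exp (ε / h * expectedPayoff ε h u m) :=
        mul_le_mul_of_nonneg_left (by linarith [add_one_le_exp (ε / h * expectedPayoff ε h u m)])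
          (potential_pos hε m).le

lemma potential_le [Nonempty ι] (hε : 0 ≤ ε) (hh : 0 < h) (hu : ∀ i a, u i a ∈ Set.Icc 0 h)
    (n : ℕ) :
    potential ε h u n ≤ Fintype.card ι * exp (ε / h * ∑ i ∈ range n, expectedPayoff ε h u i) := by
  induction n with
  | zero => simp [potential_zero]
  | succ n ih =>
    calc potential ε h u (n + 1)
        ≤ potential ε h u n * exp (ε / h * expectedPayoff ε h u n) :=
          potential_succ_le hε hh (hu n)
      _ ≤ Fintype.card ι * exp (ε / h * ∑ i ∈ range n, expectedPayoff ε h u i)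
            * exp (ε / h * expectedPayoff ε h u n) :=
          mul_le_mul_of_nonneg_right ih (exp_pos _).le
      _ = Fintype.card ι * exp (ε / h * ∑ i ∈ range (n + 1), expectedPayoff ε h u i) := by
          rw [sum_range_succ, mul_add, exp_add, mul_assoc]

lemma cumPayoff_mul_log_le [Nonempty ι] (hε : 0 ≤ ε) (hh : 0 < h)
    (hu : ∀ i a, u i a ∈ Set.Icc 0 h) (n : ℕ) (a : ι) :
    cumPayoff u n a * log (1 + ε)
      ≤ h * log (Fintype.card ι) + ε * ∑ i ∈ range n, expectedPayoff ε h u i := by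
  have hchain := (rpow_cumPayoff_le_potential hε n a).trans (potential_le hε hh hu n)
  have hlog := log_le_log (rpow_pos_of_pos (by linarith) _) hchain
  rw [log_rpow (by linarith), log_mul (by simp) (exp_pos _).ne', log_exp] at hlog
  have := mul_le_mul_of_nonneg_left hlog hh.le
  field_simp at this
  linarith

lemma sub_sq_le_log_one_add (hε : 0 ≤ ε) : ε - ε ^ 2 ≤ log (1 + ε) := by
  have hpos : 0 < 1 + ε := by linarith
  calc ε - ε ^ 2 ≤ ε / (1 + ε) := by
        rw [le_div_iff₀ hpos]
        nlinarith [pow_nonneg hε 3]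
    _ = 1 - (1 + ε)⁻¹ := by field_simp; ring
    _ ≤ log (1 + ε) := one_sub_inv_le_log_of_pos hpos

theorem le_sum_expectedPayoff [Nonempty ι] (hε : 0 < ε) (hh : 0 < h)
    (hu : ∀ i a, u i a ∈ Set.Icc 0 h) (n : ℕ) (a : ι) :
    (1 - ε) * cumPayoff u n a - h / ε * log (Fintype.card ι)
      ≤ ∑ i ∈ range n, expectedPayoff ε h u i := by
  have hU : 0 ≤ cumPayoff u n a := sum_nonneg fun i _ => (hu i a).1
  have key := (mul_le_mul_of_nonneg_left (sub_sq_le_log_one_add hε.le) hU).trans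
    (cumPayoff_mul_log_le hε.le hh hu n a)
  have hcancel : ε * (h / ε * log (Fintype.card ι)) = h * log (Fintype.card ι) := by
    field_simp
  rw [← mul_le_mul_iff_of_pos_left hε, mul_sub, hcancel]
  linarith

end

end ExponentialWeights

lemma sum_filter_val_lt_eq_sum_range {M : Type*} [AddCommMonoid M] {n : ℕ} (f : Fin n → M)
    (m : ℕ) :
    ∑ i ∈ univ.filter (fun i : Fin n => i.val < m), f i
      = ∑ j ∈ range m, if hj : j < n then f ⟨j, hj⟩ else 0 := by
  refine sum_bij_ne_zero (fun i _ _ => i.val) (fun i hi _ => by simpa using hi)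
    (fun i _ _ j _ _ => Fin.ext) (fun j hj hne => ?_) (fun i _ _ => by simp)
  by_cases hjn : j < n
  · exact ⟨⟨j, hjn⟩, by simpa using hj, by simpa [hjn] using hne, rfl⟩
  · simp [hjn] at hne

open ExponentialWeights in
theorem exponential_weights_bound_general
    (k n : ℕ) (hk : 0 < k) (h ε : ℝ) (hh : 0 < h) (hε : 0 < ε)
    (u : Fin n → Fin k → ℝ) (hu : ∀ i a, u i a ∈ Set.Icc (0 : ℝ) h) :
    ∑ i : Fin n, ∑ a : Fin k,
        ((1 + ε) ^ ((∑ i' ∈ Finset.univ.filter (fun i' : Fin n => i'.val < i.val), u i' a) / h)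
            / ∑ j : Fin k,
                (1 + ε) ^ ((∑ i' ∈ Finset.univ.filter (fun i' : Fin n => i'.val < i.val), u i' j) / h))
          * u i a
      ≥ (1 - ε) * (Finset.univ.sup' (Finset.univ_nonempty_iff.mpr ⟨⟨0, hk⟩⟩)
            fun a : Fin k => ∑ i : Fin n, u i a)
        - (h / ε) * Real.log k := by
  have : NeZero k := ⟨hk.ne'⟩
  -- extending the payoff sequence by zero leaves every cumulative payoff up to round `n` unchanged
  set v : ℕ → Fin k → ℝ := fun j a => if hj : j < n then u ⟨j, hj⟩ a else 0 with hv_def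
  have hv (j : ℕ) (a : Fin k) : v j a ∈ Set.Icc 0 h := by
    by_cases hj : j < n
    · simpa [hv_def, hj] using hu ⟨j, hj⟩ a
    · simpa [hv_def, hj] using hh.le
  have hcum (m : ℕ) (a : Fin k) :
      ∑ i' ∈ univ.filter (fun i' : Fin n => i'.val < m), u i' a = cumPayoff v m a :=
    sum_filter_val_lt_eq_sum_range (u · a) m
  obtain ⟨a₀, -, ha₀⟩ := exists_mem_eq_sup' (univ_nonempty_iff.mpr ⟨⟨0, hk⟩⟩)
    fun a : Fin k => ∑ i : Fin n, u i a
  have hOPT : ∑ i : Fin n, u i a₀ = cumPayoff v n a₀ := by simpa using hcum n a₀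
  rw [ge_iff_le, ha₀, hOPT]
  convert le_sum_expectedPayoff hε hh hv n a₀ using 1
  · simp
  rw [← Fin.sum_univ_eq_sum_range]
  refine sum_congr rfl fun i _ => ?_
  have hvi (a : Fin k) : v i a = u i a := dif_pos i.isLt
  simp only [expectedPayoff, weight, potential, ← hcum, hvi]

/-- The Exponential Weights algorithm with learning rate `ε ∈ (0,1]`,
which in round `i` plays action `a` with probability
`(1+ε)^(U^{i-1}_a/h) / Σ_j (1+ε)^(U^{i-1}_j/h)` where `U^{i-1}_a = Σ_{i'<i} u^{i'}_a`,
satisfies `E[EW] ≥ (1-ε)·OPT - (h/ε)·ln k` on every payoff sequence in `[0,h]^k`. -/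
theorem exponential_weights_bound
    (k n : ℕ) (hk : 0 < k) (h ε : ℝ) (hh : 0 < h) (hε : 0 < ε) (hε1 : ε ≤ 1)
    (u : Fin n → Fin k → ℝ) (hu : ∀ i a, u i a ∈ Set.Icc (0 : ℝ) h) :
    ∑ i : Fin n, ∑ a : Fin k,
        ((1 + ε) ^ ((∑ i' ∈ Finset.univ.filter (fun i' : Fin n => i'.val < i.val), u i' a) / h)
            / ∑ j : Fin k,
                (1 + ε) ^ ((∑ i' ∈ Finset.univ.filter (fun i' : Fin n => i'.val < i.val), u i' j) / h))
          * u i a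
      ≥ (1 - ε) * (Finset.univ.sup' (Finset.univ_nonempty_iff.mpr ⟨⟨0, hk⟩⟩)
            fun a : Fin k => ∑ i : Fin n, u i a)
        - (h / ε) * Real.log k :=
  exponential_weights_bound_general k n hk h ε hh hε u hu
end

section
/- For any fixed sequence of payoff vectors u^1, …, u^n with entries in [0,h] and any ε ∈ (0,1), Perturbed Follow the Leader and Perturbed Be the Leader, coupled on the same random hallucinated payoffs, satisfy E[FTPL] ≥ (1−ε)·E[BTPL], where E[FTPL] = E[Σ_i u^i_{a^i}] with a^i = argmax_a (u^0_a + U^{i-1}_a), and E[BTPL] = E[Σ_i u^i_{b^i}] with b^i = argmax_a (u^0_a + U^i_a), ties broken by a common fixed rule. -/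
/-!
Write `p(z) = ∏ₐ ε (1-ε)^{z a}` for the law of the perturbation vector `Z`. If Be the Leader
plays `a` in round `i` at perturbation `z`, then Follow the Leader plays `a` in round `i` at
perturbation `z + eₐ`: the extra `h` on action `a` outweighs the payoff `uⁱ ∈ [0,h]` that Be the
Leader additionally sees, and ties are broken the same way. Since `z ↦ z + eₐ` is injective and
`p(z + eₐ) = (1-ε) p(z)`, we get `P(aⁱ = a) ≥ (1-ε) P(bⁱ = a)` for every round and action;
integrating the nonnegative payoffs `uⁱ_a` against these laws gives the claim.
-/

open MeasureTheory

/-- A fixed tie-breaking rule for maximization over `Fin k`: among the maximizers of `s`,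
pick the one with the smallest index. -/
noncomputable def argmaxFin {k : ℕ} (hk : 0 < k) (s : Fin k → ℝ) : Fin k := by
  classical
  exact (Finset.univ.filter fun a => ∀ b, s b ≤ s a).min' (by
    obtain ⟨a, -, ha⟩ :=
      Finset.exists_max_image (Finset.univ : Finset (Fin k)) s
        ⟨⟨0, hk⟩, Finset.mem_univ _⟩
    exact ⟨a, Finset.mem_filter.mpr ⟨Finset.mem_univ _, fun b => ha b (Finset.mem_univ b)⟩⟩)

open Finset Function ENNReal

namespace argmaxFin

variable {k : ℕ} (hk : 0 < k)

lemma le_apply (s : Fin k → ℝ) (b : Fin k) : s b ≤ s (argmaxFin hk s) := by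
  classical
  exact (mem_filter.mp (min'_mem (univ.filter fun a => ∀ b, s b ≤ s a) _)).2 b

lemma le_of_isMax {s : Fin k → ℝ} {b : Fin k} (hb : ∀ c, s c ≤ s b) : argmaxFin hk s ≤ b := by
  classical
  exact min'_le _ _ (mem_filter.mpr ⟨mem_univ _, hb⟩)

lemma eq_of_sub_le {s t : Fin k → ℝ} {a : Fin k} (ha : argmaxFin hk s = a)
    (hst : ∀ b, t b - t a ≤ s b - s a) : argmaxFin hk t = a := by
  have hs : ∀ b, s b ≤ s a := ha ▸ le_apply hk s
  have ht : ∀ b, t b ≤ t a := fun b => by linarith [hst b, hs b]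
  refine le_antisymm (le_of_isMax hk ht) ?_
  have hsmax : ∀ c, s c ≤ s (argmaxFin hk t) := fun c => by
    linarith [hs c, hst (argmaxFin hk t), ht (argmaxFin hk t), le_apply hk t a]
  exact ha ▸ le_of_isMax hk hsmax

lemma update_succ {h : ℝ} {z : Fin k → ℕ} {v w : Fin k → ℝ} {a : Fin k}
    (hw₀ : ∀ b, 0 ≤ w b) (hwh : ∀ b, w b ≤ h)
    (ha : argmaxFin hk (fun b => h * z b + (v b + w b)) = a) :
    argmaxFin hk (fun b => h * (update z a (z a + 1) b : ℕ) + v b) = a := by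
  refine eq_of_sub_le hk ha fun b => ?_
  rcases eq_or_ne b a with rfl | hb
  · simp
  · simp only [update_self, update_of_ne hb, Nat.cast_add, Nat.cast_one]
    linarith [hw₀ b, hwh a]

end argmaxFin

lemma sum_filter_val_le_eq_add {M : Type*} [AddCommMonoid M] {n : ℕ} (f : Fin n → M)
    (i : Fin n) :
    ∑ j ∈ univ.filter (fun j : Fin n => j.val ≤ i.val), f j =
      ∑ j ∈ univ.filter (fun j : Fin n => j.val < i.val), f j + f i := by
  have hins : univ.filter (fun j : Fin n => j.val ≤ i.val) =
      insert i (univ.filter fun j : Fin n => j.val < i.val) := by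
    ext j; simp [Fin.ext_iff]; omega
  rw [hins, sum_insert (by simp), add_comm]

lemma tsum_prod_le_of_update_succ {ι : Type*} [Fintype ι] [DecidableEq ι] {w : ℕ → ℝ≥0∞}
    {q : ℝ≥0∞} (hw : ∀ m, w (m + 1) = q * w m) {A B : Set (ι → ℕ)} (a : ι)
    (hAB : ∀ z ∈ A, update z a (z a + 1) ∈ B) :
    q * ∑' z : A, ∏ b, w ((z : ι → ℕ) b) ≤ ∑' z : B, ∏ b, w ((z : ι → ℕ) b) := by
  let φ : A → B := fun z => ⟨update z a ((z : ι → ℕ) a + 1), hAB z z.2⟩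
  have hφ : Injective φ := by
    intro z₁ z₂ h
    have h' := congrArg (fun y : B => update (y : ι → ℕ) a ((y : ι → ℕ) a - 1)) h
    simpa [φ, Subtype.ext_iff] using h'
  have hprod : ∀ z : ι → ℕ, ∏ b, w (update z a (z a + 1) b) = q * ∏ b, w (z b) := by
    intro z
    have : (fun b => w (update z a (z a + 1) b)) = update (fun b => w (z b)) a (w (z a + 1)) := by
      funext b; rcases eq_or_ne b a with rfl | hb <;> simp [update_of_ne, *]
    rw [this, prod_update_of_mem (mem_univ a), hw, mul_assoc, sdiff_singleton_eq_erase,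
      mul_prod_erase _ (fun b => w (z b)) (mem_univ a)]
  calc q * ∑' z : A, ∏ b, w ((z : ι → ℕ) b)
      = ∑' z : A, ∏ b, w ((φ z : ι → ℕ) b) := by
        rw [← ENNReal.tsum_mul_left]; exact tsum_congr fun z => (hprod z).symm
    _ ≤ _ := ENNReal.tsum_comp_le_tsum_of_injective hφ _

section Probability

variable {Ω : Type*} [MeasurableSpace Ω] {μ : Measure Ω}

lemma measure_eq_of_measure_le_eq_pow [IsFiniteMeasure μ] {X : Ω → ℕ} (hX : Measurable X)
    {q : ℝ} (hq : 0 ≤ q)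
    (htail : ∀ ℓ, μ {ω | ℓ ≤ X ω} = ENNReal.ofReal (q ^ ℓ)) (m : ℕ) :
    μ {ω | X ω = m} = ENNReal.ofReal ((1 - q) * q ^ m) := by
  have hset : {ω | X ω = m} = {ω | m ≤ X ω} \ {ω | m + 1 ≤ X ω} := by
    ext ω; simp only [Set.mem_ofPred_eq, Set.mem_sdiff]; omega
  have hsub : {ω | m + 1 ≤ X ω} ⊆ {ω | m ≤ X ω} := fun ω (hω : m + 1 ≤ X ω) => by
    change m ≤ X ω; omega
  rw [hset, measure_sdiff hsub (hX measurableSet_Ici).nullMeasurableSet (measure_ne_top μ _),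
    htail, htail, ← ENNReal.ofReal_sub _ (by positivity)]
  ring_nf

variable {ι : Type*} [Fintype ι] {Z : ι → Ω → ℕ}

lemma measure_preimage_eq_tsum_prod (hZ : ∀ a, Measurable (Z a))
    (hindep : ProbabilityTheory.iIndepFun Z μ) {w : ℕ → ℝ≥0∞}
    (hw : ∀ a m, μ {ω | Z a ω = m} = w m) (T : Set (ι → ℕ)) :
    μ ((fun ω a => Z a ω) ⁻¹' T) = ∑' z : T, ∏ a, w ((z : ι → ℕ) a) := by
  rw [← tsum_measure_preimage_singleton T.to_countable
    fun z _ => measurable_pi_lambda _ hZ (measurableSet_singleton z)]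
  refine tsum_congr fun z => ?_
  have hset : (fun ω a => Z a ω) ⁻¹' {(z : ι → ℕ)} = ⋂ a ∈ univ, Z a ⁻¹' {(z : ι → ℕ) a} := by
    ext ω; simp [funext_iff]
  rw [hset, hindep.measure_inter_preimage_eq_mul univ (sets := fun a => {(z : ι → ℕ) a})
    fun a _ => measurableSet_singleton _]
  exact prod_congr rfl fun a _ => hw a _

lemma le_measure_preimage_of_update_succ [DecidableEq ι] (hZ : ∀ a, Measurable (Z a))
    (hindep : ProbabilityTheory.iIndepFun Z μ) {w : ℕ → ℝ≥0∞} {q : ℝ≥0∞}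
    (hw : ∀ a m, μ {ω | Z a ω = m} = w m) (hsucc : ∀ m, w (m + 1) = q * w m)
    {A B : Set (ι → ℕ)} (a : ι) (hAB : ∀ z ∈ A, update z a (z a + 1) ∈ B) :
    q * μ ((fun ω a => Z a ω) ⁻¹' A) ≤ μ ((fun ω a => Z a ω) ⁻¹' B) := by
  rw [measure_preimage_eq_tsum_prod hZ hindep hw, measure_preimage_eq_tsum_prod hZ hindep hw]
  exact tsum_prod_le_of_update_succ hsucc a hAB

variable [IsFiniteMeasure μ] {α : Type*} [Fintype α] [MeasurableSpace α]
  [MeasurableSingletonClass α]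

lemma integral_comp_eq_sum {g : Ω → α} (hg : Measurable g) (f : α → ℝ) :
    ∫ ω, f (g ω) ∂μ = ∑ a, μ.real (g ⁻¹' {a}) * f a := by
  rw [← integral_map hg.aemeasurable .of_discrete, integral_fintype .of_finite]
  simp [map_measureReal_apply hg]

lemma mul_integral_comp_le {g₁ g₂ : Ω → α} (hg₁ : Measurable g₁) (hg₂ : Measurable g₂)
    {f : α → ℝ} (hf : ∀ a, 0 ≤ f a) {c : ℝ} (hc : 0 ≤ c)
    (h : ∀ a, ENNReal.ofReal c * μ (g₂ ⁻¹' {a}) ≤ μ (g₁ ⁻¹' {a})) :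
    c * ∫ ω, f (g₂ ω) ∂μ ≤ ∫ ω, f (g₁ ω) ∂μ := by
  rw [integral_comp_eq_sum hg₁, integral_comp_eq_sum hg₂, mul_sum]
  refine sum_le_sum fun a _ => ?_
  rw [← mul_assoc]
  refine mul_le_mul_of_nonneg_right ?_ (hf a)
  calc c * μ.real (g₂ ⁻¹' {a}) = (ENNReal.ofReal c * μ (g₂ ⁻¹' {a})).toReal := by
        rw [toReal_mul, toReal_ofReal hc, measureReal_def]
    _ ≤ μ.real (g₁ ⁻¹' {a}) := toReal_mono (measure_ne_top μ _) (h a)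

end Probability

theorem ftpl_stability_general
    (k n : ℕ) (hk : 0 < k) (h ε : ℝ) (hε1 : ε < 1)
    (u : Fin n → Fin k → ℝ) (hu : ∀ i a, u i a ∈ Set.Icc (0 : ℝ) h)
    {Ω : Type*} [MeasurableSpace Ω] (μ : Measure Ω) [IsProbabilityMeasure μ]
    (Z : Fin k → Ω → ℕ)
    (hmeas : ∀ a, Measurable (Z a))
    (hindep : ProbabilityTheory.iIndepFun Z μ)
    (hgeom : ∀ (a : Fin k) (ℓ : ℕ),
      μ {ω | ℓ ≤ Z a ω} = ENNReal.ofReal ((1 - ε) ^ ℓ)) :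
    ∫ ω, (∑ i : Fin n,
        u i (argmaxFin hk (fun a =>
          h * (Z a ω : ℝ) +
            ∑ i' ∈ Finset.univ.filter (fun i' : Fin n => i'.val < i.val), u i' a))) ∂μ
      ≥ (1 - ε) *
        ∫ ω, (∑ i : Fin n,
          u i (argmaxFin hk (fun a =>
            h * (Z a ω : ℝ) +
              ∑ i' ∈ Finset.univ.filter (fun i' : Fin n => i'.val ≤ i.val), u i' a))) ∂μ := by
  classical
  have hq : 0 ≤ 1 - ε := by linarith
  let Zv : Ω → Fin k → ℕ := fun ω a => Z a ω
  let F (i : Fin n) (z : Fin k → ℕ) : Fin k := argmaxFin hk fun a =>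
    h * z a + ∑ i' ∈ univ.filter (fun i' : Fin n => i'.val < i.val), u i' a
  let G (i : Fin n) (z : Fin k → ℕ) : Fin k := argmaxFin hk fun a =>
    h * z a + ∑ i' ∈ univ.filter (fun i' : Fin n => i'.val ≤ i.val), u i' a
  have hmeasZv (g : (Fin k → ℕ) → Fin k) : Measurable fun ω => g (Zv ω) :=
    (measurable_of_countable g).comp (measurable_pi_lambda _ hmeas)
  have hsucc : ∀ m : ℕ, ENNReal.ofReal ((1 - (1 - ε)) * (1 - ε) ^ (m + 1)) =
      ENNReal.ofReal (1 - ε) * ENNReal.ofReal ((1 - (1 - ε)) * (1 - ε) ^ m) := fun m => by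
    rw [← ENNReal.ofReal_mul hq]; ring_nf
  have hshift (i : Fin n) (a : Fin k) : ENNReal.ofReal (1 - ε) * μ (Zv ⁻¹' (G i ⁻¹' {a})) ≤
      μ (Zv ⁻¹' (F i ⁻¹' {a})) :=
    le_measure_preimage_of_update_succ hmeas hindep
      (fun a => measure_eq_of_measure_le_eq_pow (hmeas a) hq (hgeom a)) hsucc a
      fun z hz => argmaxFin.update_succ hk (fun b => (hu i b).1) (fun b => (hu i b).2)
        (by simpa only [G, sum_filter_val_le_eq_add, Set.mem_preimage, Set.mem_singleton_iff]
          using hz)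
  have hint (g : (Fin k → ℕ) → Fin k) (i : Fin n) : Integrable (fun ω => u i (g (Zv ω))) μ :=
    Integrable.of_finite.comp_measurable (hmeasZv g)
  change (1 - ε) * ∫ ω, ∑ i, u i (G i (Zv ω)) ∂μ ≤ ∫ ω, ∑ i, u i (F i (Zv ω)) ∂μ
  rw [integral_finsetSum _ fun i _ => hint (G i) i, integral_finsetSum _ fun i _ => hint (F i) i,
    mul_sum]
  exact sum_le_sum fun i _ =>
    mul_integral_comp_le (hmeasZv (F i)) (hmeasZv (G i)) (fun a => (hu i a).1) hq (hshift i)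

/-- Stability: Couple Perturbed Follow the Leader and Perturbed Be the
Leader on the same hallucinated payoffs `u⁰_a = h·Z_a`, where the `Z_a` are independent
geometric random variables with parameter `ε ∈ (0,1)` (`P(Z_a ≥ ℓ) = (1-ε)^ℓ`), with a
common fixed tie-breaking rule.  For any payoff sequence in `[0,h]^k`,
`E[FTPL] ≥ (1-ε)·E[BTPL]`. -/
theorem ftpl_stability
    (k n : ℕ) (hk : 0 < k) (h ε : ℝ) (hh : 0 < h) (hε : 0 < ε) (hε1 : ε < 1)
    (u : Fin n → Fin k → ℝ) (hu : ∀ i a, u i a ∈ Set.Icc (0 : ℝ) h)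
    {Ω : Type*} [MeasurableSpace Ω] (μ : Measure Ω) [IsProbabilityMeasure μ]
    (Z : Fin k → Ω → ℕ)
    (hmeas : ∀ a, Measurable (Z a))
    (hindep : ProbabilityTheory.iIndepFun Z μ)
    (hgeom : ∀ (a : Fin k) (ℓ : ℕ),
      μ {ω | ℓ ≤ Z a ω} = ENNReal.ofReal ((1 - ε) ^ ℓ)) :
    ∫ ω, (∑ i : Fin n,
        u i (argmaxFin hk (fun a =>
          h * (Z a ω : ℝ) +
            ∑ i' ∈ Finset.univ.filter (fun i' : Fin n => i'.val < i.val), u i' a))) ∂μ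
      ≥ (1 - ε) *
        ∫ ω, (∑ i : Fin n,
          u i (argmaxFin hk (fun a =>
            h * (Z a ω : ℝ) +
              ∑ i' ∈ Finset.univ.filter (fun i' : Fin n => i'.val ≤ i.val), u i' a))) ∂μ :=
  ftpl_stability_general k n hk h ε hε1 u hu μ Z hmeas hindep hgeom
end

section
/- For any fixed sequence of payoff vectors u^1, …, u^n with entries in [0,h] and any ε ∈ (0,1), the Perturbed Be the Leader benchmark satisfies E[BTPL] ≥ OPT − (h/ε)·(1 + ln k), where OPT = max_a Σ_{i=1}^n u^i_a. -/
/-!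
Be the Leader: if the initial payoffs satisfy `c ≤ C`, the player who in each round plays the
leader of `c + U^i` (cumulative payoffs including the current round) earns at least
`c_a + U^n_a - C` for every action `a`. Induct on the rounds: the newest leader `b` beats `a` on
`c + U^n`, and by induction `c_b + U^{n-1}_b ≤ C + (earnings before the last round)`.
With `c = h Z` and `C = h · max_a Z_a` this gives `BTPL ≥ OPT - h · max_a Z_a` pointwise.

A union bound gives `P(max_a Z_a > ℓ) ≤ min (1, k (1 - ε)^(ℓ+1))`. Summing these tail
probabilities, the first `L = ⌈ln k / ε⌉` terms contribute at most `L ≤ ln k / ε + 1`, and since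
`k (1 - ε)^L ≤ k e^(-ε L) ≤ 1` the rest contributes at most `(1 - ε) / ε`; hence
`E[max_a Z_a] ≤ (1 + ln k) / ε`.
-/

open MeasureTheory

open Finset
open scoped ENNReal

theorem le_apply_argmaxFin {k : ℕ} (hk : 0 < k) (s : Fin k → ℝ) (a : Fin k) :
    s a ≤ s (argmaxFin hk s) := by
  classical
  exact (mem_filter.mp (min'_mem (univ.filter fun a => ∀ b, s b ≤ s a) _)).2 a

theorem add_sum_le_add_sum_argmaxFin {ι : Type*} [LinearOrder ι] {k : ℕ} (hk : 0 < k)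
    (c : Fin k → ℝ) {C : ℝ} (hC : ∀ a, c a ≤ C) (u : ι → Fin k → ℝ) (s : Finset ι)
    (a : Fin k) :
    c a + ∑ j ∈ s, u j a ≤
      C + ∑ i ∈ s, u i (argmaxFin hk fun b => c b + ∑ j ∈ s.filter (· ≤ i), u j b) := by
  induction s using Finset.induction_on_max generalizing a with
  | empty => simpa using hC a
  | insert x t hlt ih =>
    have hx : x ∉ t := fun hx => (hlt x hx).false
    have filter_x : (insert x t).filter (· ≤ x) = insert x t :=
      filter_true_of_mem fun i hi => by
        rcases mem_insert.mp hi with rfl | hi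
        exacts [le_rfl, (hlt i hi).le]
    have filter_t : ∀ i ∈ t, (insert x t).filter (· ≤ i) = t.filter (· ≤ i) := fun i hi => by
      rw [filter_insert, if_neg (hlt i hi).not_ge]
    set leader := argmaxFin hk fun b => c b + ∑ j ∈ insert x t, u j b
    calc c a + ∑ j ∈ insert x t, u j a
        ≤ c leader + ∑ j ∈ insert x t, u j leader :=
          le_apply_argmaxFin hk (fun b => c b + ∑ j ∈ insert x t, u j b) a
      _ = u x leader + (c leader + ∑ j ∈ t, u j leader) := by rw [sum_insert hx]; ring
      _ ≤ u x leader +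
            (C + ∑ i ∈ t, u i (argmaxFin hk fun b => c b + ∑ j ∈ t.filter (· ≤ i), u j b)) :=
          add_le_add_right (ih leader) _
      _ = _ := by
          have h_rest : ∑ i ∈ t, u i (argmaxFin hk fun b =>
                c b + ∑ j ∈ (insert x t).filter (· ≤ i), u j b) =
              ∑ i ∈ t, u i (argmaxFin hk fun b => c b + ∑ j ∈ t.filter (· ≤ i), u j b) :=
            sum_congr rfl fun i hi => by rw [filter_t i hi]
          rw [sum_insert hx, filter_x, h_rest]
          ring

theorem natCast_mul_one_sub_pow_ceil_le_one {k : ℕ} (hk : 0 < k) {ε : ℝ} (hε : 0 < ε)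
    (hε1 : ε ≤ 1) : (k : ℝ) * (1 - ε) ^ ⌈Real.log k / ε⌉₊ ≤ 1 := by
  set L := ⌈Real.log k / ε⌉₊
  have hk0 : (0 : ℝ) < k := by exact_mod_cast hk
  have hL : Real.log k ≤ ε * L := by
    have := Nat.le_ceil (Real.log k / ε)
    rwa [div_le_iff₀ hε, mul_comm] at this
  have hpow : (1 - ε) ^ L ≤ (k : ℝ)⁻¹ :=
    calc (1 - ε) ^ L ≤ Real.exp (-ε) ^ L :=
          pow_le_pow_left₀ (by linarith) (Real.one_sub_le_exp_neg ε) L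
      _ = Real.exp (-(ε * L)) := by rw [← Real.exp_nat_mul]; ring_nf
      _ ≤ Real.exp (-Real.log k) := Real.exp_le_exp.mpr (by linarith)
      _ = (k : ℝ)⁻¹ := by rw [Real.exp_neg, Real.exp_log hk0]
  calc (k : ℝ) * (1 - ε) ^ L ≤ k * (k : ℝ)⁻¹ := by gcongr
    _ = 1 := mul_inv_cancel₀ hk0.ne'

theorem tsum_le_of_le_one_of_le_geometric {k : ℕ} (hk : 0 < k) {ε : ℝ} (hε : 0 < ε)
    (hε1 : ε < 1) {p : ℕ → ℝ≥0∞} (hp_one : ∀ ℓ, p ℓ ≤ 1)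
    (hp_geom : ∀ ℓ, p ℓ ≤ k * ENNReal.ofReal ((1 - ε) ^ (ℓ + 1))) :
    ∑' ℓ, p ℓ ≤ ENNReal.ofReal ((1 + Real.log k) / ε) := by
  set L := ⌈Real.log k / ε⌉₊
  have hr0 : 0 ≤ 1 - ε := by linarith
  have hr1 : 1 - ε < 1 := by linarith
  have head : ∑ ℓ ∈ range L, p ℓ ≤ L := by
    simpa using sum_le_sum fun ℓ (_ : ℓ ∈ range L) => hp_one ℓ
  have tail : ∑' j, p (j + L) ≤ ENNReal.ofReal ((1 - ε) / ε) := by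
    have hsum : HasSum (fun j : ℕ => (k : ℝ) * (1 - ε) ^ (j + L + 1))
        ((k * (1 - ε) ^ L) * ((1 - ε) / ε)) := by
      have h := (hasSum_geometric_of_lt_one hr0 hr1).mul_left ((k * (1 - ε) ^ L) * (1 - ε))
      rw [_root_.sub_sub_cancel] at h
      rw [mul_div_assoc']
      exact h.congr_fun fun j => by ring
    calc ∑' j, p (j + L) ≤ ∑' j, ENNReal.ofReal ((k : ℝ) * (1 - ε) ^ (j + L + 1)) :=
          ENNReal.tsum_le_tsum fun j => by
            rw [ENNReal.ofReal_mul (Nat.cast_nonneg k), ENNReal.ofReal_natCast]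
            exact hp_geom (j + L)
      _ = ENNReal.ofReal ((k * (1 - ε) ^ L) * ((1 - ε) / ε)) := by
          rw [← ENNReal.ofReal_tsum_of_nonneg (fun j => by positivity) hsum.summable, hsum.tsum_eq]
      _ ≤ ENNReal.ofReal ((1 - ε) / ε) := by
          gcongr
          calc (k * (1 - ε) ^ L) * ((1 - ε) / ε) ≤ 1 * ((1 - ε) / ε) := by
                gcongr; exact natCast_mul_one_sub_pow_ceil_le_one hk hε hε1.le
            _ = _ := one_mul _
  have hL : (L : ℝ) ≤ Real.log k / ε + 1 :=
    (Nat.ceil_lt_add_one (div_nonneg (Real.log_natCast_nonneg k) hε.le)).le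
  calc ∑' ℓ, p ℓ = ∑ ℓ ∈ range L, p ℓ + ∑' j, p (j + L) :=
        (Summable.sum_add_tsum_nat_add' ENNReal.summable).symm
    _ ≤ ENNReal.ofReal L + ENNReal.ofReal ((1 - ε) / ε) := by
        rw [ENNReal.ofReal_natCast]; exact add_le_add head tail
    _ = ENNReal.ofReal (L + (1 - ε) / ε) :=
        (ENNReal.ofReal_add L.cast_nonneg (div_nonneg hr0 hε.le)).symm
    _ ≤ ENNReal.ofReal ((1 + Real.log k) / ε) := by
        gcongr
        calc (L : ℝ) + (1 - ε) / ε ≤ Real.log k / ε + 1 + (1 - ε) / ε := by linarith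
          _ = (1 + Real.log k) / ε := by field_simp; ring

section

variable {Ω : Type*} [MeasurableSpace Ω] {μ : Measure Ω}

theorem lintegral_natCast_eq_tsum_measure_lt {N : Ω → ℕ} (hN : Measurable N) :
    ∫⁻ ω, (N ω : ℝ≥0∞) ∂μ = ∑' ℓ : ℕ, μ {ω | ℓ < N ω} := by
  have hset (ℓ : ℕ) : MeasurableSet {ω | ℓ < N ω} := measurableSet_lt measurable_const hN
  have layer_cake (ω : Ω) : (N ω : ℝ≥0∞) = ∑' ℓ : ℕ, {ω | ℓ < N ω}.indicator 1 ω := by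
    rw [tsum_eq_sum (s := range (N ω)) fun ℓ hℓ => by simpa using hℓ]
    rw [sum_congr rfl fun ℓ hℓ =>
      Set.indicator_of_mem (show ω ∈ {ω | ℓ < N ω} from mem_range.mp hℓ) (1 : Ω → ℝ≥0∞)]
    simp
  simp_rw [layer_cake]
  rw [lintegral_tsum (f := fun ℓ => {ω | ℓ < N ω}.indicator 1)
    fun ℓ => (measurable_const.indicator (hset ℓ)).aemeasurable]
  exact tsum_congr fun ℓ => lintegral_indicator_one (hset ℓ)

theorem measure_lt_sup_le {ι : Type*} [Fintype ι] (X : ι → Ω → ℕ) {ℓ : ℕ} {q : ℝ≥0∞}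
    (hX : ∀ a, μ {ω | ℓ < X a ω} ≤ q) :
    μ {ω | ℓ < univ.sup fun a => X a ω} ≤ Fintype.card ι * q := by
  have hunion : {ω | ℓ < univ.sup fun a => X a ω} = ⋃ a, {ω | ℓ < X a ω} := by
    ext ω; simp [Finset.lt_sup_iff]
  calc μ {ω | ℓ < univ.sup fun a => X a ω} ≤ ∑ a, μ {ω | ℓ < X a ω} := by
        rw [hunion]; exact measure_iUnion_fintype_le μ _
    _ ≤ ∑ _a : ι, q := sum_le_sum fun a _ => hX a
    _ = Fintype.card ι * q := by simp

theorem lintegral_sup_le_of_geometric {ι : Type*} [Fintype ι] [Nonempty ι]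
    [IsProbabilityMeasure μ] {ε : ℝ} (hε : 0 < ε) (hε1 : ε < 1) (X : ι → Ω → ℕ)
    (hX : ∀ a, Measurable (X a))
    (hgeom : ∀ a (ℓ : ℕ), μ {ω | ℓ ≤ X a ω} ≤ ENNReal.ofReal ((1 - ε) ^ ℓ)) :
    ∫⁻ ω, ((univ.sup fun a => X a ω : ℕ) : ℝ≥0∞) ∂μ
      ≤ ENNReal.ofReal ((1 + Real.log (Fintype.card ι)) / ε) := by
  have hsup : Measurable fun ω => univ.sup fun a => X a ω :=
    (measurable_of_countable fun v : ι → ℕ => univ.sup v).comp (measurable_pi_lambda _ hX)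
  rw [lintegral_natCast_eq_tsum_measure_lt hsup]
  exact tsum_le_of_le_one_of_le_geometric Fintype.card_pos hε hε1 (fun ℓ => prob_le_one)
    fun ℓ => measure_lt_sup_le X fun a => hgeom a (ℓ + 1)

theorem integrable_natCast_and_integral_le {N : Ω → ℕ} (hN : Measurable N) {B : ℝ} (hB : 0 ≤ B)
    (hN_le : ∫⁻ ω, (N ω : ℝ≥0∞) ∂μ ≤ ENNReal.ofReal B) :
    Integrable (fun ω => (N ω : ℝ)) μ ∧ ∫ ω, (N ω : ℝ) ∂μ ≤ B := by
  have hNm : AEMeasurable (fun ω => (N ω : ℝ≥0∞)) μ :=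
    (measurable_of_countable _).comp hN |>.aemeasurable
  have h_ne_top : ∫⁻ ω, (N ω : ℝ≥0∞) ∂μ ≠ ⊤ := ne_top_of_le_ne_top ENNReal.ofReal_ne_top hN_le
  simp_rw [← ENNReal.toReal_natCast]
  refine ⟨integrable_toReal_of_lintegral_ne_top hNm h_ne_top, ?_⟩
  rw [integral_toReal hNm (ae_of_all _ fun ω => ENNReal.natCast_lt_top _)]
  exact ENNReal.toReal_le_of_le_ofReal hB hN_le

end

theorem btpl_small_perturbation_general
    (k n : ℕ) (hk : 0 < k) (h ε : ℝ) (hh : 0 < h) (hε : 0 < ε) (hε1 : ε < 1)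
    (u : Fin n → Fin k → ℝ)
    {Ω : Type*} [MeasurableSpace Ω] (μ : Measure Ω) [IsProbabilityMeasure μ]
    (Z : Fin k → Ω → ℕ)
    (hmeas : ∀ a, Measurable (Z a))
    (hgeom : ∀ (a : Fin k) (ℓ : ℕ),
      μ {ω | ℓ ≤ Z a ω} = ENNReal.ofReal ((1 - ε) ^ ℓ)) :
    ∫ ω, (∑ i : Fin n,
        u i (argmaxFin hk (fun a =>
          h * (Z a ω : ℝ) +
            ∑ i' ∈ Finset.univ.filter (fun i' : Fin n => i'.val ≤ i.val), u i' a))) ∂μ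
      ≥ (Finset.univ.sup' (Finset.univ_nonempty_iff.mpr ⟨⟨0, hk⟩⟩)
            fun a : Fin k => ∑ i : Fin n, u i a)
        - (h / ε) * (1 + Real.log k) := by
  have : Nonempty (Fin k) := ⟨⟨0, hk⟩⟩
  set OPT := Finset.univ.sup' (Finset.univ_nonempty_iff.mpr ⟨⟨0, hk⟩⟩)
    fun a : Fin k => ∑ i : Fin n, u i a
  set M : Ω → ℕ := fun ω => univ.sup fun a => Z a ω
  have hM_meas : Measurable M :=
    (measurable_of_countable fun z : Fin k → ℕ => univ.sup z).comp (measurable_pi_lambda _ hmeas)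
  obtain ⟨hM_int, hM_le⟩ := integrable_natCast_and_integral_le (μ := μ) hM_meas
    (B := (1 + Real.log k) / ε) (by positivity) <| by
      simpa only [Fintype.card_fin] using
        lintegral_sup_le_of_geometric hε hε1 Z hmeas fun a ℓ => (hgeom a ℓ).le
  have h_leader_meas (i : Fin n) := (measurable_of_countable fun z : Fin k → ℕ =>
    argmaxFin hk fun a => h * (z a : ℝ) +
      ∑ i' ∈ univ.filter (fun i' : Fin n => i'.val ≤ i.val), u i' a).comp
    (measurable_pi_lambda _ hmeas)
  rw [ge_iff_le]
  calc OPT - h / ε * (1 + Real.log k) ≤ OPT - h * ∫ ω, (M ω : ℝ) ∂μ := by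
        rw [div_mul_eq_mul_div, mul_div_assoc]; gcongr
    _ = ∫ ω, (OPT - h * M ω) ∂μ := by
        rw [integral_sub (integrable_const _) (hM_int.const_mul h), integral_const_mul]
        simp
    _ ≤ _ := by
        refine integral_mono ((integrable_const _).sub (hM_int.const_mul h))
          (integrable_finsetSum _ fun i _ =>
            Integrable.of_finite.comp_measurable (h_leader_meas i)) fun ω => ?_
        refine sub_le_iff_le_add'.mpr (sup'_le _ _ fun a _ => ?_)
        refine (le_add_of_nonneg_left (by positivity : 0 ≤ h * (Z a ω : ℝ))).trans ?_
        exact add_sum_le_add_sum_argmaxFin hk (fun a => h * (Z a ω : ℝ)) (C := h * M ω)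
          (fun a => by gcongr; exact le_sup (f := fun a => Z a ω) (mem_univ a)) u univ a

/-- Small perturbation: Perturbed Be the Leader — which in round `i` plays
`argmax_a (u⁰_a + U^i_a)` where `u⁰_a = h·Z_a` and the `Z_a` are independent geometric
random variables with parameter `ε ∈ (0,1)` (`P(Z_a ≥ ℓ) = (1-ε)^ℓ`) — satisfies
`E[BTPL] ≥ OPT - (h/ε)·(1 + ln k)` on every payoff sequence in `[0,h]^k`. -/
theorem btpl_small_perturbation
    (k n : ℕ) (hk : 0 < k) (h ε : ℝ) (hh : 0 < h) (hε : 0 < ε) (hε1 : ε < 1)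
    (u : Fin n → Fin k → ℝ) (hu : ∀ i a, u i a ∈ Set.Icc (0 : ℝ) h)
    {Ω : Type*} [MeasurableSpace Ω] (μ : Measure Ω) [IsProbabilityMeasure μ]
    (Z : Fin k → Ω → ℕ)
    (hmeas : ∀ a, Measurable (Z a))
    (hindep : ProbabilityTheory.iIndepFun Z μ)
    (hgeom : ∀ (a : Fin k) (ℓ : ℕ),
      μ {ω | ℓ ≤ Z a ω} = ENNReal.ofReal ((1 - ε) ^ ℓ)) :
    ∫ ω, (∑ i : Fin n,
        u i (argmaxFin hk (fun a =>
          h * (Z a ω : ℝ) +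
            ∑ i' ∈ Finset.univ.filter (fun i' : Fin n => i'.val ≤ i.val), u i' a))) ∂μ
      ≥ (Finset.univ.sup' (Finset.univ_nonempty_iff.mpr ⟨⟨0, hk⟩⟩)
            fun a : Fin k => ∑ i : Fin n, u i a)
        - (h / ε) * (1 + Real.log k) :=
  btpl_small_perturbation_general k n hk h ε hh hε hε1 u μ Z hmeas hgeom
end

section
/- For any fixed sequence of payoff vectors u^1, …, u^n with entries in [0,h] and any ε ∈ (0,1), the Perturbed Follow the Leader algorithm satisfies E[FTPL] ≥ (1−ε)·OPT − (h/ε)·(1 + ln k), where OPT = max_a Σ_{i=1}^n u^i_a. -/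
/-! Raising by one the perturbation `Z_a` of the action `a` that the one-round-ahead leader
(the leader that already sees round `i`) plays costs a factor `1 - ε` in probability, and makes
`a` the round-`i` leader as well, because one round changes a cumulative payoff by at most `h`.
The shift is injective, so `E[FTPL] ≥ (1 - ε) E[BTL]`, where `BTL` plays the one-round-ahead
leaders. Deterministically `BTL` beats every fixed action up to the head start
`h · max_a Z_a`, and a union bound on the geometric tails gives
`E[max_a Z_a] ≤ (1 + ln k) / ε`. -/
open MeasureTheory

open Finset
open scoped ENNReal

section Argmax

variable {k : ℕ} (hk : 0 < k)

theorem le_argmaxFin (s : Fin k → ℝ) (b : Fin k) : s b ≤ s (argmaxFin hk s) := by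
  classical
  exact (mem_filter.mp (min'_mem (univ.filter fun a => ∀ b, s b ≤ s a) _)).2 b

theorem argmaxFin_le {s : Fin k → ℝ} {a : Fin k} (ha : ∀ b, s b ≤ s a) : argmaxFin hk s ≤ a :=
  min'_le _ _ (mem_filter.mpr ⟨mem_univ _, ha⟩)

theorem argmaxFin_eq_of_raise_at {s t : Fin k → ℝ} {a : Fin k} (hs : argmaxFin hk s = a)
    (hat : s a ≤ t a) (hne : ∀ b ≠ a, t b ≤ s b) : argmaxFin hk t = a := by
  have hsa : ∀ b, s b ≤ s a := hs ▸ le_argmaxFin hk s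
  have hta : ∀ b, t b ≤ t a := fun b => by
    by_cases hb : b = a
    · rw [hb]
    · exact (hne b hb).trans ((hsa b).trans hat)
  refine le_antisymm (argmaxFin_le hk hta) (not_lt.mp fun hlt => ?_)
  -- a maximizer of `t` other than `a` would also maximize `s`, and come before `a`
  have hb := hne _ hlt.ne
  have : ∀ c, s c ≤ s (argmaxFin hk t) := fun c =>
    (hsa c).trans (hat.trans ((le_argmaxFin hk t a).trans hb))
  exact (hs ▸ argmaxFin_le hk this).not_gt hlt

end Argmax

section Leader

variable {k n : ℕ} (hk : 0 < k) (u : Fin n → Fin k → ℝ)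

def cumPayoff (m : ℕ) (a : Fin k) : ℝ :=
  ∑ i ∈ univ.filter (fun i : Fin n => i.val < m), u i a

theorem cumPayoff_zero (a : Fin k) : cumPayoff u 0 a = 0 := by
  simp [cumPayoff]

theorem filter_val_lt_succ (i : Fin n) :
    univ.filter (fun j : Fin n => j.val < i.val + 1)
      = insert i (univ.filter fun j : Fin n => j.val < i.val) := by
  ext j
  simp only [mem_filter, mem_insert, mem_univ, true_and, Fin.ext_iff]
  omega

theorem cumPayoff_succ (i : Fin n) (a : Fin k) :
    cumPayoff u (i.val + 1) a = cumPayoff u i.val a + u i a := by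
  rw [cumPayoff, filter_val_lt_succ, sum_insert (by simp), add_comm]
  rfl

theorem cumPayoff_self (a : Fin k) : cumPayoff u n a = ∑ i, u i a := by
  rw [cumPayoff, filter_true_of_mem fun i _ => i.isLt]

/-- `P` is the vector of hallucinated initial payoffs `u⁰`. -/
noncomputable def perturbedLeader (P : Fin k → ℝ) (m : ℕ) : Fin k :=
  argmaxFin hk fun a => P a + cumPayoff u m a

theorem add_cumPayoff_le_perturbedLeader (P : Fin k → ℝ) (m : ℕ) (a : Fin k) :
    P a + cumPayoff u m a
      ≤ P (perturbedLeader hk u P m) + cumPayoff u m (perturbedLeader hk u P m) :=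
  le_argmaxFin hk (fun a => P a + cumPayoff u m a) a

theorem le_sum_filter_perturbedLeader_succ (P : Fin k → ℝ) :
    ∀ m ≤ n, P (perturbedLeader hk u P m) + cumPayoff u m (perturbedLeader hk u P m)
        - P (perturbedLeader hk u P 0)
      ≤ ∑ i ∈ univ.filter (fun i : Fin n => i.val < m), u i (perturbedLeader hk u P (i.val + 1))
  | 0, _ => by simp [cumPayoff_zero]
  | m + 1, hm => by
    set L := perturbedLeader hk u P
    have ih := le_sum_filter_perturbedLeader_succ P m (Nat.le_of_succ_le hm)
    have hlead := add_cumPayoff_le_perturbedLeader hk u P m (L (m + 1))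
    have hstep := cumPayoff_succ u ⟨m, hm⟩ (L (m + 1))
    rw [filter_val_lt_succ ⟨m, hm⟩, sum_insert (by simp)]
    linarith

theorem le_sum_perturbedLeader_succ (P : Fin k → ℝ) (a : Fin k) :
    ∑ i, u i a + P a - P (perturbedLeader hk u P 0)
      ≤ ∑ i, u i (perturbedLeader hk u P (i.val + 1)) := by
  have hbtl := le_sum_filter_perturbedLeader_succ hk u P n le_rfl
  have hlead := add_cumPayoff_le_perturbedLeader hk u P n a
  rw [filter_true_of_mem fun i _ => i.isLt] at hbtl
  rw [cumPayoff_self] at hlead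
  linarith

end Leader

section GeometricLaw

variable {Ω : Type*} [MeasurableSpace Ω] {μ : Measure Ω} {ε : ℝ}

theorem measure_preimage_singleton_succ_of_geometric [IsFiniteMeasure μ] {X : Ω → ℕ} (hε1 : ε ≤ 1)
    (hX : Measurable X) (htail : ∀ ℓ : ℕ, μ {ω | ℓ ≤ X ω} = ENNReal.ofReal ((1 - ε) ^ ℓ))
    (t : ℕ) : μ (X ⁻¹' {t + 1}) = ENNReal.ofReal (1 - ε) * μ (X ⁻¹' {t}) := by
  have hpoint : ∀ t : ℕ, μ (X ⁻¹' {t}) = ENNReal.ofReal (ε * (1 - ε) ^ t) := fun t => by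
    have hdiff : X ⁻¹' {t} = {ω | t ≤ X ω} \ {ω | t + 1 ≤ X ω} := by
      ext ω
      simp only [Set.mem_preimage, Set.mem_singleton_iff, Set.mem_sdiff, Set.mem_ofPred_eq]
      omega
    rw [hdiff, measure_sdiff (show {ω | t + 1 ≤ X ω} ⊆ {ω | t ≤ X ω} from
      fun ω (hω : t + 1 ≤ X ω) => show t ≤ X ω by omega)
      (hX measurableSet_Ici).nullMeasurableSet (measure_ne_top μ _), htail, htail,
      ← ENNReal.ofReal_sub _ (pow_nonneg (by linarith) _)]
    ring_nf
  rw [hpoint, hpoint, ← ENNReal.ofReal_mul (by linarith)]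
  ring_nf

variable {k : ℕ} {Z : Fin k → Ω → ℕ}

theorem map_pi_singleton_eq_prod (hmeas : ∀ a, Measurable (Z a))
    (hindep : ProbabilityTheory.iIndepFun Z μ) (z : Fin k → ℕ) :
    (μ.map fun ω a => Z a ω) {z} = ∏ a, μ (Z a ⁻¹' {z a}) := by
  have hpre : (fun ω a => Z a ω) ⁻¹' {z} = ⋂ a ∈ univ, Z a ⁻¹' {z a} := by
    ext ω
    simp [funext_iff]
  rw [Measure.map_apply (measurable_pi_lambda _ hmeas) (measurableSet_singleton z), hpre]
  exact hindep.measure_inter_preimage_eq_mul univ fun a _ => measurableSet_singleton (z a)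

theorem map_pi_singleton_update_succ [IsFiniteMeasure μ] (hε1 : ε ≤ 1)
    (hmeas : ∀ a, Measurable (Z a)) (hindep : ProbabilityTheory.iIndepFun Z μ)
    (hgeom : ∀ a (ℓ : ℕ), μ {ω | ℓ ≤ Z a ω} = ENNReal.ofReal ((1 - ε) ^ ℓ))
    (z : Fin k → ℕ) (a : Fin k) :
    (μ.map fun ω b => Z b ω) {Function.update z a (z a + 1)}
      = ENNReal.ofReal (1 - ε) * (μ.map fun ω b => Z b ω) {z} := by
  rw [map_pi_singleton_eq_prod hmeas hindep, map_pi_singleton_eq_prod hmeas hindep]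
  simp_rw [Function.apply_update (fun b t => μ (Z b ⁻¹' {t}))]
  rw [prod_update_of_mem (mem_univ a), ← mul_prod_erase univ _ (mem_univ a),
    measure_preimage_singleton_succ_of_geometric hε1 (hmeas a) (hgeom a), mul_assoc,
    sdiff_singleton_eq_erase]

end GeometricLaw

theorem integral_mul_le_integral_of_injective {α : Type*} [MeasurableSpace α] [Countable α]
    [MeasurableSingletonClass α] {ν : Measure α} {c : ℝ} (hc : 0 ≤ c) {φ : α → α}
    (hφ : φ.Injective) (hν : ∀ z, ENNReal.ofReal c * ν {z} ≤ ν {φ z}) {F G : α → ℝ}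
    (hF : 0 ≤ F) (hG : 0 ≤ G) (hGi : Integrable G ν) (hFG : ∀ z, F z ≤ G (φ z)) :
    c * ∫ z, F z ∂ν ≤ ∫ z, G z ∂ν := by
  have hlin : ENNReal.ofReal c * ∫⁻ z, ENNReal.ofReal (F z) ∂ν
      ≤ ∫⁻ z, ENNReal.ofReal (G z) ∂ν := by
    rw [lintegral_countable', lintegral_countable', ← ENNReal.tsum_mul_left]
    calc ∑' z, ENNReal.ofReal c * (ENNReal.ofReal (F z) * ν {z})
        ≤ ∑' z, ENNReal.ofReal (G (φ z)) * ν {φ z} := ENNReal.tsum_le_tsum fun z => by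
          rw [mul_left_comm]
          exact mul_le_mul' (ENNReal.ofReal_le_ofReal (hFG z)) (hν z)
      _ ≤ ∑' w, ENNReal.ofReal (G w) * ν {w} :=
          ENNReal.tsum_comp_le_tsum_of_injective hφ fun w => ENNReal.ofReal (G w) * ν {w}
  rw [integral_eq_lintegral_of_nonneg_ae (.of_forall hF)
      (measurable_of_countable F).aestronglyMeasurable,
    integral_eq_lintegral_of_nonneg_ae (.of_forall hG)
      (measurable_of_countable G).aestronglyMeasurable,
    ← ENNReal.toReal_ofReal hc, ← ENNReal.toReal_mul]
  exact ENNReal.toReal_mono hGi.lintegral_lt_top.ne hlin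

theorem integrable_of_countable_of_mem_Icc {α : Type*} [MeasurableSpace α] [Countable α]
    [MeasurableSingletonClass α] {ν : Measure α} [IsFiniteMeasure ν] {G : α → ℝ} {h : ℝ}
    (hG : ∀ z, G z ∈ Set.Icc 0 h) : Integrable G ν :=
  Integrable.of_bound (measurable_of_countable G).aestronglyMeasurable h
    (.of_forall fun z => by rw [Real.norm_of_nonneg (hG z).1]; exact (hG z).2)

theorem Function.injective_update_succ {ι : Type*} [DecidableEq ι] {f g : (ι → ℕ) → ι}
    (hfg : ∀ z, g (Function.update z (f z) (z (f z) + 1)) = f z) :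
    Function.Injective fun z => Function.update z (f z) (z (f z) + 1) := by
  intro z z' h
  simp only at h
  have hf : f z = f z' := by rw [← hfg z, ← hfg z', h]
  rw [← hf] at h
  funext b
  have hb := congrFun h b
  by_cases hba : b = f z
  · subst hba
    simpa using hb
  · simpa [Function.update_of_ne hba] using hb

section Stability

variable {k n : ℕ} (hk : 0 < k) {u : Fin n → Fin k → ℝ} {h : ℝ}
  (hu : ∀ i a, u i a ∈ Set.Icc 0 h) {ν : Measure (Fin k → ℕ)}
include hu

theorem perturbedLeader_update_succ (i : Fin n) {z : Fin k → ℕ} {a : Fin k}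
    (ha : perturbedLeader hk u (fun b => h * z b) (i.val + 1) = a) :
    perturbedLeader hk u (fun b => h * (Function.update z a (z a + 1) b : ℕ)) i.val = a := by
  refine argmaxFin_eq_of_raise_at hk ha ?_ fun b hb => ?_
  · simp only [Function.update_self, cumPayoff_succ]
    push_cast
    linarith [(hu i a).2]
  · simp only [Function.update_of_ne hb, cumPayoff_succ]
    linarith [(hu i b).1]

variable [IsFiniteMeasure ν] {ε : ℝ} (hε1 : ε ≤ 1)
  (hν : ∀ z a, ν {Function.update z a (z a + 1)} = ENNReal.ofReal (1 - ε) * ν {z})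
include hε1 hν

theorem one_sub_mul_integral_payoff_perturbedLeader_succ_le (i : Fin n) :
    (1 - ε) * ∫ z, u i (perturbedLeader hk u (fun b => h * z b) (i.val + 1)) ∂ν
      ≤ ∫ z, u i (perturbedLeader hk u (fun b => h * z b) i.val) ∂ν := by
  set L : ℕ → (Fin k → ℕ) → Fin k := fun m z => perturbedLeader hk u (fun b => h * z b) m
  have hshift : ∀ z, L i.val (Function.update z (L (i.val + 1) z) (z (L (i.val + 1) z) + 1))
      = L (i.val + 1) z := fun z => perturbedLeader_update_succ hk hu i rfl
  exact integral_mul_le_integral_of_injective (by linarith)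
    (Function.injective_update_succ hshift) (fun z => (hν z _).ge)
    (fun z => (hu i _).1) (fun z => (hu i _).1)
    (integrable_of_countable_of_mem_Icc fun z => hu i _) fun z => (congrArg (u i) (hshift z)).ge

theorem one_sub_mul_integral_sum_payoff_perturbedLeader_succ_le :
    (1 - ε) * ∫ z, ∑ i, u i (perturbedLeader hk u (fun b => h * z b) (i.val + 1)) ∂ν
      ≤ ∫ z, ∑ i, u i (perturbedLeader hk u (fun b => h * z b) i.val) ∂ν := by
  rw [integral_finsetSum _ fun i _ => integrable_of_countable_of_mem_Icc fun z => hu i _,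
    integral_finsetSum _ fun i _ => integrable_of_countable_of_mem_Icc fun z => hu i _, mul_sum]
  exact sum_le_sum fun i _ => one_sub_mul_integral_payoff_perturbedLeader_succ_le hk hu hε1 hν i

end Stability

theorem sum_sub_mul_integral_sup_le_integral_perturbedLeader_succ {k n : ℕ} (hk : 0 < k)
    {u : Fin n → Fin k → ℝ} {h : ℝ} (hh : 0 ≤ h) (hu : ∀ i a, u i a ∈ Set.Icc 0 h)
    {ν : Measure (Fin k → ℕ)} [IsProbabilityMeasure ν]
    (hsup : Integrable (fun z => ((univ.sup z : ℕ) : ℝ)) ν) (a : Fin k) :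
    ∑ i, u i a - h * ∫ z, ((univ.sup z : ℕ) : ℝ) ∂ν
      ≤ ∫ z, ∑ i, u i (perturbedLeader hk u (fun b => h * z b) (i.val + 1)) ∂ν := by
  have hpoint : ∀ z : Fin k → ℕ, ∑ i, u i a - h * (univ.sup z : ℕ)
      ≤ ∑ i, u i (perturbedLeader hk u (fun b => h * z b) (i.val + 1)) := fun z => by
    have hlead := le_sum_perturbedLeader_succ hk u (fun b => h * z b) a
    have hle : (z (perturbedLeader hk u (fun b => h * z b) 0) : ℝ) ≤ (univ.sup z : ℕ) := by
      exact_mod_cast le_sup (mem_univ _)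
    have : 0 ≤ h * z a := by positivity
    nlinarith
  calc ∑ i, u i a - h * ∫ z, ((univ.sup z : ℕ) : ℝ) ∂ν
      = ∫ z, (∑ i, u i a - h * (univ.sup z : ℕ)) ∂ν := by
        rw [integral_sub (integrable_const _) (hsup.const_mul h), integral_const_mul,
          integral_const, probReal_univ, one_smul]
    _ ≤ _ := integral_mono ((integrable_const _).sub (hsup.const_mul h))
        (integrable_finsetSum _ fun i _ => integrable_of_countable_of_mem_Icc fun z => hu i _)
        hpoint

section ExpectedMaximum

theorem summable_min_one_mul_pow {c q : ℝ} (hc : 0 ≤ c) (hq0 : 0 ≤ q) (hq1 : q < 1) :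
    Summable fun ℓ : ℕ => min 1 (c * q ^ (ℓ + 1)) :=
  ((summable_geometric_of_lt_one hq0 hq1).mul_left (c * q)).of_nonneg_of_le
    (fun ℓ => by positivity) fun ℓ => (min_le_right _ _).trans_eq (by ring)

theorem tsum_min_one_mul_pow_le {c q : ℝ} (hc : 0 ≤ c) (hq0 : 0 ≤ q) (hq1 : q < 1) {m : ℕ}
    (hm : c * q ^ m ≤ 1) : ∑' ℓ : ℕ, min 1 (c * q ^ (ℓ + 1)) ≤ m + q / (1 - q) := by
  have hgeom := summable_geometric_of_lt_one hq0 hq1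
  have hs := summable_min_one_mul_pow hc hq0 hq1
  have hhead : ∑ ℓ ∈ range m, min 1 (c * q ^ (ℓ + 1)) ≤ m := by
    simpa using sum_le_sum fun ℓ (_ : ℓ ∈ range m) => min_le_left 1 (c * q ^ (ℓ + 1))
  have htail : ∑' ℓ : ℕ, min 1 (c * q ^ (ℓ + m + 1)) ≤ q / (1 - q) :=
    calc ∑' ℓ : ℕ, min 1 (c * q ^ (ℓ + m + 1))
        ≤ ∑' ℓ : ℕ, c * q ^ m * q * q ^ ℓ :=
          (hs.comp_injective (add_left_injective m)).tsum_le_tsum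
            (fun ℓ => (min_le_right _ _).trans_eq (by ring)) (hgeom.mul_left _)
      _ = c * q ^ m * q / (1 - q) := by
          rw [tsum_mul_left, tsum_geometric_of_lt_one hq0 hq1, div_eq_mul_inv]
      _ ≤ q / (1 - q) := by
          gcongr
          nlinarith
  rw [← hs.sum_add_tsum_nat_add m]
  linarith

theorem tsum_min_one_natCast_mul_one_sub_pow_le {k : ℕ} (hk : 0 < k) {ε : ℝ} (hε : 0 < ε)
    (hε1 : ε ≤ 1) :
    ∑' ℓ : ℕ, min 1 ((k : ℝ) * (1 - ε) ^ (ℓ + 1)) ≤ (1 + Real.log k) / ε := by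
  have hlog : 0 ≤ Real.log k := Real.log_nonneg (by exact_mod_cast hk)
  have hceil : (⌈Real.log k / ε⌉₊ : ℝ) < Real.log k / ε + 1 :=
    Nat.ceil_lt_add_one (by positivity)
  calc _ ≤ ⌈Real.log k / ε⌉₊ + (1 - ε) / (1 - (1 - ε)) :=
        tsum_min_one_mul_pow_le (Nat.cast_nonneg k) (by linarith) (by linarith)
          (natCast_mul_one_sub_pow_ceil_le_one hk hε hε1)
    _ ≤ (1 + Real.log k) / ε := by
        rw [sub_sub_cancel, sub_div, div_self hε.ne', add_div]
        linarith

variable {Ω : Type*} [MeasurableSpace Ω] {μ : Measure Ω}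

theorem lintegral_natCast_eq_tsum_measure {f : Ω → ℕ} (hf : Measurable f) :
    ∫⁻ ω, (f ω : ℝ≥0∞) ∂μ = ∑' ℓ : ℕ, μ {ω | ℓ < f ω} := by
  have hsets : ∀ ℓ : ℕ, MeasurableSet {ω | ℓ < f ω} := fun ℓ => hf measurableSet_Ioi
  have hpoint : ∀ ω, (f ω : ℝ≥0∞) = ∑' ℓ : ℕ, {ω | ℓ < f ω}.indicator 1 ω := fun ω => by
    rw [tsum_eq_sum (s := range (f ω)) fun ℓ hℓ => by simp_all]
    simp [Set.indicator_apply, filter_true_of_mem fun ℓ => mem_range.mp]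
  simp_rw [hpoint]
  rw [lintegral_tsum fun ℓ => (measurable_one.indicator (hsets ℓ)).aemeasurable]
  simp_rw [lintegral_indicator_one (hsets _)]

variable [IsProbabilityMeasure μ] {k : ℕ} {ε : ℝ} {Z : Fin k → Ω → ℕ}

theorem measure_lt_sup_le_of_geometric
    (hgeom : ∀ a (ℓ : ℕ), μ {ω | ℓ ≤ Z a ω} = ENNReal.ofReal ((1 - ε) ^ ℓ)) (ℓ : ℕ) :
    μ {ω | ℓ < univ.sup fun a => Z a ω} ≤ ENNReal.ofReal (min 1 (k * (1 - ε) ^ (ℓ + 1))) := by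
  rcases le_total 1 ((k : ℝ) * (1 - ε) ^ (ℓ + 1)) with h1 | h1
  · rw [min_eq_left h1, ENNReal.ofReal_one]
    exact prob_le_one
  · rw [min_eq_right h1]
    have hsub : {ω | ℓ < univ.sup fun a => Z a ω} ⊆ ⋃ a, {ω | ℓ + 1 ≤ Z a ω} :=
      fun ω (hω : ℓ < univ.sup fun a => Z a ω) => by
      obtain ⟨a, -, ha⟩ := Finset.lt_sup_iff.mp hω
      exact Set.mem_iUnion.mpr ⟨a, ha⟩
    calc _ ≤ ∑ a, μ {ω | ℓ + 1 ≤ Z a ω} :=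
          (measure_mono hsub).trans (measure_iUnion_fintype_le μ _)
      _ = ∑ _a : Fin k, ENNReal.ofReal ((1 - ε) ^ (ℓ + 1)) :=
          sum_congr rfl fun a _ => hgeom a (ℓ + 1)
      _ = _ := by simp [ENNReal.ofReal_mul]

theorem integral_sup_le_of_geometric (hk : 0 < k) (hε : 0 < ε) (hε1 : ε ≤ 1)
    (hmeas : ∀ a, Measurable (Z a))
    (hgeom : ∀ a (ℓ : ℕ), μ {ω | ℓ ≤ Z a ω} = ENNReal.ofReal ((1 - ε) ^ ℓ)) :
    Integrable (fun ω => ((univ.sup fun a => Z a ω : ℕ) : ℝ)) μ ∧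
      ∫ ω, ((univ.sup fun a => Z a ω : ℕ) : ℝ) ∂μ ≤ (1 + Real.log k) / ε := by
  set M : Ω → ℕ := fun ω => univ.sup fun a => Z a ω
  have hM : Measurable M :=
    (measurable_of_countable fun z : Fin k → ℕ => univ.sup z).comp (measurable_pi_lambda _ hmeas)
  have hlin : ∫⁻ ω, (M ω : ℝ≥0∞) ∂μ ≤ ENNReal.ofReal ((1 + Real.log k) / ε) := by
    rw [lintegral_natCast_eq_tsum_measure hM]
    calc _ ≤ ∑' ℓ : ℕ, ENNReal.ofReal (min 1 (k * (1 - ε) ^ (ℓ + 1))) :=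
          ENNReal.tsum_le_tsum (measure_lt_sup_le_of_geometric hgeom)
      _ = ENNReal.ofReal (∑' ℓ : ℕ, min 1 (k * (1 - ε) ^ (ℓ + 1))) :=
          (ENNReal.ofReal_tsum_of_nonneg
            (fun ℓ => le_min zero_le_one
              (mul_nonneg (Nat.cast_nonneg k) (pow_nonneg (by linarith) _)))
            (summable_min_one_mul_pow (Nat.cast_nonneg k) (by linarith) (by linarith))).symm
      _ ≤ _ := ENNReal.ofReal_le_ofReal (tsum_min_one_natCast_mul_one_sub_pow_le hk hε hε1)
  have hcast : (fun ω => (M ω : ℝ)) = fun ω => (M ω : ℝ≥0∞).toReal := by simp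
  have hMe : AEMeasurable (fun ω => (M ω : ℝ≥0∞)) μ := (measurable_from_nat.comp hM).aemeasurable
  rw [hcast]
  refine ⟨integrable_toReal_of_lintegral_ne_top hMe
    (ne_top_of_le_ne_top ENNReal.ofReal_ne_top hlin), ?_⟩
  rw [integral_toReal hMe (.of_forall fun ω => ENNReal.natCast_lt_top _)]
  exact ENNReal.toReal_le_of_le_ofReal (by positivity) hlin

end ExpectedMaximum

/-- Perturbed Follow the Leader — which in round `i` plays
`argmax_a (u⁰_a + U^{i-1}_a)` with hallucinated payoffs `u⁰_a = h·Z_a`, the `Z_a` being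
independent geometric random variables with parameter `ε ∈ (0,1)`
(`P(Z_a ≥ ℓ) = (1-ε)^ℓ`), ties broken by a fixed rule — satisfies
`E[FTPL] ≥ (1-ε)·OPT - (h/ε)·(1 + ln k)` on every payoff sequence in `[0,h]^k`. -/
theorem ftpl_main_bound
    (k n : ℕ) (hk : 0 < k) (h ε : ℝ) (hh : 0 < h) (hε : 0 < ε) (hε1 : ε < 1)
    (u : Fin n → Fin k → ℝ) (hu : ∀ i a, u i a ∈ Set.Icc (0 : ℝ) h)
    {Ω : Type*} [MeasurableSpace Ω] (μ : Measure Ω) [IsProbabilityMeasure μ]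
    (Z : Fin k → Ω → ℕ)
    (hmeas : ∀ a, Measurable (Z a))
    (hindep : ProbabilityTheory.iIndepFun Z μ)
    (hgeom : ∀ (a : Fin k) (ℓ : ℕ),
      μ {ω | ℓ ≤ Z a ω} = ENNReal.ofReal ((1 - ε) ^ ℓ)) :
    ∫ ω, (∑ i : Fin n,
        u i (argmaxFin hk (fun a =>
          h * (Z a ω : ℝ) +
            ∑ i' ∈ Finset.univ.filter (fun i' : Fin n => i'.val < i.val), u i' a))) ∂μ
      ≥ (1 - ε) *
          (Finset.univ.sup' (Finset.univ_nonempty_iff.mpr ⟨⟨0, hk⟩⟩)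
            fun a : Fin k => ∑ i : Fin n, u i a)
        - (h / ε) * (1 + Real.log k) := by
  have hZ : Measurable fun ω a => Z a ω := measurable_pi_lambda _ hmeas
  set ν := μ.map fun ω a => Z a ω
  have : IsProbabilityMeasure ν := Measure.isProbabilityMeasure_map hZ.aemeasurable
  obtain ⟨a₀, -, hOPT⟩ := exists_mem_eq_sup' (univ_nonempty_iff.mpr ⟨⟨0, hk⟩⟩)
    fun a : Fin k => ∑ i, u i a
  obtain ⟨hsup, hsup_le⟩ := integral_sup_le_of_geometric (μ := ν) (Z := fun a z => z a) hk hε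
    hε1.le measurable_pi_apply fun a ℓ =>
      (Measure.map_apply hZ (measurable_pi_apply a measurableSet_Ici)).trans (hgeom a ℓ)
  have hbtl := sum_sub_mul_integral_sup_le_integral_perturbedLeader_succ hk hh.le hu hsup a₀
  have hstab := one_sub_mul_integral_sum_payoff_perturbedLeader_succ_le hk hu hε1.le
    (map_pi_singleton_update_succ hε1.le hmeas hindep hgeom)
  have hsup_nonneg : 0 ≤ ∫ z, ((univ.sup z : ℕ) : ℝ) ∂ν := integral_nonneg fun z => by positivity
  have hhead : h * ∫ z, ((univ.sup z : ℕ) : ℝ) ∂ν ≤ h / ε * (1 + Real.log k) := by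
    rw [div_mul_eq_mul_div, mul_div_assoc]
    exact mul_le_mul_of_nonneg_left hsup_le hh.le
  rw [ge_iff_le, hOPT]
  calc (1 - ε) * ∑ i, u i a₀ - h / ε * (1 + Real.log k)
      ≤ (1 - ε) * (∑ i, u i a₀ - h * ∫ z, ((univ.sup z : ℕ) : ℝ) ∂ν) := by
        nlinarith [mul_nonneg hh.le hsup_nonneg]
    _ ≤ _ := (mul_le_mul_of_nonneg_left hbtl (by linarith)).trans hstab
    _ = _ := integral_map hZ.aemeasurable (measurable_of_countable _).aestronglyMeasurable
end

section
/- Suppose a full-feedback online learning algorithm OLA guarantees, for every input sequence of payoff vectors in [0, h̃]^k and every fixed action a*, that its expected payoff satisfies E[OLA] ≥ (1−ε)·Σ_i ũ^i_{a*} − (h̃/ε)·ln k. Then the multi-armed bandit algorithm obtained by the reduction — in each round mixing the OLA's recommended distribution α̃^i with uniform exploration via α^i_a = (1−ε)·α̃^i_a + ε/k, sampling a^i ∼ α^i, and feeding OLA the propensity-score estimates ũ^i_a = u^i_a/α^i_a if a = a^i and 0 otherwise — satisfies, for every (adaptively realizable) true payoff sequence u^1, …, u^n in [0,h]^k, E[MAB]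 ≥ (1−2ε)·OPT − (h·k/ε²)·ln k, where E[MAB] = Σ_i E[α^i · u^i] and OPT = max_a Σ_i u^i_a. -/
/-! The exploration term `ε/k` costs a factor `1 - ε` against the full-feedback algorithm's
own payoff and keeps every sampling probability at least `ε/k`, so the propensity-score
estimates lie in `[0, kh/ε]` and the full-feedback guarantee applies to them pathwise.
Because round `i`'s estimate is unbiased given the first `i` actions, taking expectations
(round by round, from the last round backwards) replaces the estimates by the true payoffs,
and `(1 - ε)² ≥ 1 - 2ε` finishes the computation. -/

/-- The history of propensity-score payoff estimates fed to the full-feedback algorithm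
`OLA` during the first `i` rounds of the bandit reduction, as a function of the true
payoffs `u` and the realized actions `ω`: in round `i` the estimate reported for action
`a` is `u^i_a / α^i_a` if `a = ω i` (where `α^i_a = (1-ε)·OLA(history)_a + ε/k` is the
actual sampling probability) and `0` otherwise. -/
noncomputable def estList (k : ℕ) (OLA : List (Fin k → ℝ) → Fin k → ℝ) (ε : ℝ)
    (u : ℕ → Fin k → ℝ) (ω : ℕ → Fin k) : ℕ → List (Fin k → ℝ)
  | 0 => []
  | (i + 1) =>
      estList k OLA ε u ω i ++
        [fun a => if a = ω i then
            u i a / ((1 - ε) * OLA (estList k OLA ε u ω i) a + ε / k) else 0]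

/-- The actual sampling distribution of the bandit reduction in round `i`:
`α^i_a = (1-ε)·α̃^i_a + ε/k`, where `α̃^i = OLA(estimate history)`. -/
noncomputable def mabDist (k : ℕ) (OLA : List (Fin k → ℝ) → Fin k → ℝ) (ε : ℝ)
    (u : ℕ → Fin k → ℝ) (ω : ℕ → Fin k) (i : ℕ) (a : Fin k) : ℝ :=
  (1 - ε) * OLA (estList k OLA ε u ω i) a + ε / k

open Finset Function

def seqExt {α : Type*} (d : α) {n : ℕ} (ω : Fin n → α) : ℕ → α :=
  fun j => if hj : j < n then ω ⟨j, hj⟩ else d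

theorem seqExt_snoc {α : Type*} (d : α) {n : ℕ} (ω : Fin n → α) (b : α) :
    seqExt d (Fin.snoc ω b : Fin (n + 1) → α) = update (seqExt d ω) n b := by
  funext j
  rcases lt_trichotomy j n with hj | rfl | hj
  · simp [seqExt, hj, Nat.lt_succ_of_lt hj, hj.ne, Fin.snoc]
  · simp [seqExt, Fin.snoc]
  · simp [seqExt, hj.ne', show ¬ j < n + 1 by omega, show ¬ j < n by omega]

theorem DependsOn.apply_update_of_notMem {ι α β : Type*} [DecidableEq ι]
    {f : (ι → α) → β} {s : Set ι} (hf : DependsOn f s) {j : ι} (hj : j ∉ s)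
    (x : ι → α) (b : α) : f (Function.update x j b) = f x :=
  hf fun _ hi => Function.update_of_ne (ne_of_mem_of_not_mem hi hj) _ _

section SequentialSampling

variable {α : Type*} [Fintype α] (p : (ℕ → α) → ℕ → α → ℝ) (d : α)

/-- Expectation of `g` over `n` rounds in which round `i` draws its action from `p ω i`,
a distribution that may depend on the earlier actions; the sequence is padded with `d`. -/
noncomputable def seqExpect (n : ℕ) (g : (ℕ → α) → ℝ) : ℝ :=
  ∑ ω : Fin n → α, (∏ i : Fin n, p (seqExt d ω) i (ω i)) * g (seqExt d ω)

theorem seqExpect_sum {ι : Type*} (s : Finset ι) (n : ℕ) (g : ι → (ℕ → α) → ℝ) :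
    seqExpect p d n (fun ω => ∑ i ∈ s, g i ω) = ∑ i ∈ s, seqExpect p d n (g i) := by
  simp only [seqExpect, mul_sum]
  exact sum_comm

theorem seqExpect_const_mul (n : ℕ) (c : ℝ) (g : (ℕ → α) → ℝ) :
    seqExpect p d n (fun ω => c * g ω) = c * seqExpect p d n g := by
  simp only [seqExpect, mul_sum, mul_left_comm]

theorem seqExpect_sub (n : ℕ) (g₁ g₂ : (ℕ → α) → ℝ) :
    seqExpect p d n (fun ω => g₁ ω - g₂ ω) = seqExpect p d n g₁ - seqExpect p d n g₂ := by
  simp only [seqExpect, mul_sub, sum_sub_distrib]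

theorem seqExpect_mono {p} (hp0 : ∀ ω i a, 0 ≤ p ω i a) (n : ℕ) {g₁ g₂ : (ℕ → α) → ℝ}
    (hg : ∀ ω, g₁ ω ≤ g₂ ω) : seqExpect p d n g₁ ≤ seqExpect p d n g₂ :=
  sum_le_sum fun _ _ => mul_le_mul_of_nonneg_left (hg _) (prod_nonneg fun _ _ => hp0 _ _ _)

variable {p} (hp : ∀ i, DependsOn (fun ω => p ω i) (Set.Iio i))
include hp

theorem seqExpect_succ (n : ℕ) (g : (ℕ → α) → ℝ) :
    seqExpect p d (n + 1) g =
      seqExpect p d n (fun ω => ∑ b, p ω n b * g (update ω n b)) := by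
  have hpast : ∀ (ω : Fin n → α) (b : α) (i : ℕ), i ≤ n →
      p (update (seqExt d ω) n b) i = p (seqExt d ω) i :=
    fun ω b i hi => (hp i).apply_update_of_notMem (by simpa using hi) _ _
  rw [seqExpect, ← (Fin.snocEquiv fun _ => α).sum_comp, Fintype.sum_prod_type, sum_comm]
  refine sum_congr rfl fun ω _ => ?_
  rw [mul_sum]
  refine sum_congr rfl fun b _ => ?_
  rw [show (Fin.snocEquiv fun _ => α) (b, ω) = Fin.snoc ω b from rfl, seqExt_snoc]
  simp only [Fin.prod_univ_castSucc, Fin.snoc_castSucc, Fin.snoc_last, Fin.val_castSucc,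
    Fin.val_last]
  rw [hpast ω b n le_rfl, prod_congr rfl fun i _ => by rw [hpast ω b i i.isLt.le]]
  ring

variable (hp1 : ∀ ω i, ∑ a, p ω i a = 1)
include hp1

theorem seqExpect_of_dependsOn {m n : ℕ} (hmn : m ≤ n) {g : (ℕ → α) → ℝ}
    (hg : DependsOn g (Set.Iio m)) : seqExpect p d n g = seqExpect p d m g := by
  induction n, hmn using Nat.le_induction with
  | base => rfl
  | succ n hmn ih =>
    rw [seqExpect_succ d hp, ← ih]
    congr 1
    funext ω
    simp_rw [hg.apply_update_of_notMem (by simpa using hmn), ← sum_mul, hp1, one_mul]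

theorem seqExpect_of_dependsOn_succ {i n : ℕ} (hi : i < n) {g : (ℕ → α) → ℝ}
    (hg : DependsOn g (Set.Iio (i + 1))) :
    seqExpect p d n g = seqExpect p d i (fun ω => ∑ b, p ω i b * g (update ω i b)) := by
  rw [seqExpect_of_dependsOn d hp hp1 hi hg, seqExpect_succ d hp]

theorem seqExpect_const (n : ℕ) (c : ℝ) : seqExpect p d n (fun _ => c) = c := by
  rw [seqExpect_of_dependsOn d hp hp1 (Nat.zero_le n) fun _ _ _ => rfl]
  simp [seqExpect]

end SequentialSampling

section BanditReduction

variable (k : ℕ) (OLA : List (Fin k → ℝ) → Fin k → ℝ) (ε : ℝ) (u : ℕ → Fin k → ℝ)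

noncomputable def ipsEst (ω : ℕ → Fin k) (i : ℕ) (a : Fin k) : ℝ :=
  if a = ω i then u i a / mabDist k OLA ε u ω i a else 0

theorem estList_eq_map (ω : ℕ → Fin k) (i : ℕ) :
    estList k OLA ε u ω i = (List.range i).map (ipsEst k OLA ε u ω) := by
  induction i with
  | zero => rfl
  | succ i ih => rw [List.range_succ, List.map_append, ← ih, estList]; rfl

theorem estList_dependsOn (i : ℕ) :
    DependsOn (fun ω => estList k OLA ε u ω i) (Set.Iio i) := by
  intro ω ω' hωω'
  induction i with
  | zero => rfl
  | succ i ih =>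
    simp only [estList, ih fun j hj => hωω' j (Nat.lt_succ_of_lt hj), hωω' i (Nat.lt_succ_self i)]

theorem mabDist_dependsOn (i : ℕ) :
    DependsOn (fun ω => mabDist k OLA ε u ω i) (Set.Iio i) := fun ω ω' hωω' => by
  funext a
  simp only [mabDist, estList_dependsOn k OLA ε u i hωω']

theorem ipsEst_dependsOn (i : ℕ) (a : Fin k) :
    DependsOn (fun ω => ipsEst k OLA ε u ω i a) (Set.Iio (i + 1)) := fun ω ω' hωω' => by
  simp only [ipsEst, hωω' i (Nat.lt_succ_self i),
    mabDist_dependsOn k OLA ε u i fun j hj => hωω' j (Nat.lt_succ_of_lt hj)]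

theorem sum_mabDist (hk : k ≠ 0) (hOLA1 : ∀ l, ∑ a, OLA l a = 1) (ω : ℕ → Fin k) (i : ℕ) :
    ∑ a, mabDist k OLA ε u ω i a = 1 := by
  simp only [mabDist, sum_add_distrib, ← mul_sum, hOLA1, sum_const, card_univ, Fintype.card_fin,
    nsmul_eq_mul]
  field_simp
  ring

variable {k OLA ε}

theorem div_le_mabDist (hε1 : ε ≤ 1) (hOLA0 : ∀ l a, 0 ≤ OLA l a) (ω : ℕ → Fin k) (i : ℕ)
    (a : Fin k) : ε / k ≤ mabDist k OLA ε u ω i a := by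
  have := mul_nonneg (sub_nonneg.mpr hε1) (hOLA0 (estList k OLA ε u ω i) a)
  unfold mabDist
  linarith

theorem mabDist_pos (hk : 0 < k) (hε : 0 < ε) (hε1 : ε ≤ 1) (hOLA0 : ∀ l a, 0 ≤ OLA l a)
    (ω : ℕ → Fin k) (i : ℕ) (a : Fin k) : 0 < mabDist k OLA ε u ω i a :=
  (div_pos hε (Nat.cast_pos.mpr hk)).trans_le (div_le_mabDist u hε1 hOLA0 ω i a)

theorem ipsEst_mem_Icc (hk : 0 < k) (hε : 0 < ε) (hε1 : ε ≤ 1) (hOLA0 : ∀ l a, 0 ≤ OLA l a)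
    {h : ℝ} (ω : ℕ → Fin k) (i : ℕ) (hu : ∀ a, u i a ∈ Set.Icc 0 h) (a : Fin k) :
    ipsEst k OLA ε u ω i a ∈ Set.Icc 0 (k * h / ε) := by
  obtain ⟨hu0, huh⟩ := hu a
  have hεk : 0 < ε / k := div_pos hε (Nat.cast_pos.mpr hk)
  have hbound : u i a / mabDist k OLA ε u ω i a ≤ k * h / ε :=
    calc u i a / mabDist k OLA ε u ω i a ≤ h / (ε / k) :=
          div_le_div₀ (hu0.trans huh) huh hεk (div_le_mabDist u hε1 hOLA0 ω i a)
      _ = k * h / ε := by field_simp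
  unfold ipsEst
  split_ifs
  · exact ⟨div_nonneg hu0 (mabDist_pos u hk hε hε1 hOLA0 ω i a).le, hbound⟩
  · exact ⟨le_rfl, (div_nonneg hu0 (mabDist_pos u hk hε hε1 hOLA0 ω i a).le).trans hbound⟩

theorem sum_mabDist_mul_ipsEst_update (hk : 0 < k) (hε : 0 < ε) (hε1 : ε ≤ 1)
    (hOLA0 : ∀ l a, 0 ≤ OLA l a) (ω : ℕ → Fin k) (i : ℕ) (a : Fin k) :
    ∑ b, mabDist k OLA ε u ω i b * ipsEst k OLA ε u (update ω i b) i a = u i a := by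
  have hupdate : ∀ b, ipsEst k OLA ε u (update ω i b) i a =
      if a = b then u i a / mabDist k OLA ε u ω i a else 0 := fun b => by
    rw [ipsEst, update_self,
      (mabDist_dependsOn k OLA ε u i).apply_update_of_notMem (by simp) ω b]
  simp only [hupdate, mul_ite, mul_zero, sum_ite_eq, mem_univ, if_true]
  exact mul_div_cancel₀ _ (mabDist_pos u hk hε hε1 hOLA0 ω i a).ne'

theorem seqExpect_mul_ipsEst (hk : 0 < k) (hε : 0 < ε) (hε1 : ε ≤ 1)
    (hOLA0 : ∀ l a, 0 ≤ OLA l a) (hOLA1 : ∀ l, ∑ a, OLA l a = 1) (d : Fin k) {i n : ℕ}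
    (hi : i < n) {c : (ℕ → Fin k) → ℝ} (hc : DependsOn c (Set.Iio i)) (a : Fin k) :
    seqExpect (mabDist k OLA ε u) d n (fun ω => c ω * ipsEst k OLA ε u ω i a) =
      seqExpect (mabDist k OLA ε u) d n (fun ω => c ω * u i a) := by
  have hp := mabDist_dependsOn k OLA ε u
  have hp1 := sum_mabDist k OLA ε u hk.ne' hOLA1
  have hc' : DependsOn c (Set.Iio (i + 1)) := hc.mono (Set.Iio_subset_Iio (Nat.le_succ i))
  rw [seqExpect_of_dependsOn_succ d hp hp1 hi fun ω ω' hωω' =>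
      congrArg₂ (· * ·) (hc' hωω') (ipsEst_dependsOn k OLA ε u i a hωω'),
    seqExpect_of_dependsOn_succ d hp hp1 hi fun ω ω' hωω' => by rw [hc' hωω']]
  congr 1
  funext ω
  simp only [hc.apply_update_of_notMem (by simp : i ∉ Set.Iio i), mul_left_comm _ (c ω),
    ← mul_sum, ← sum_mul, sum_mabDist_mul_ipsEst_update u hk hε hε1 hOLA0, hp1, one_mul]

theorem seqExpect_sum_OLA_mul_ipsEst (hk : 0 < k) (hε : 0 < ε) (hε1 : ε ≤ 1)
    (hOLA0 : ∀ l a, 0 ≤ OLA l a) (hOLA1 : ∀ l, ∑ a, OLA l a = 1) (d : Fin k) (n : ℕ) :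
    seqExpect (mabDist k OLA ε u) d n
        (fun ω => ∑ i ∈ range n, ∑ a, OLA (estList k OLA ε u ω i) a * ipsEst k OLA ε u ω i a) =
      seqExpect (mabDist k OLA ε u) d n
        (fun ω => ∑ i ∈ range n, ∑ a, OLA (estList k OLA ε u ω i) a * u i a) := by
  simp only [seqExpect_sum]
  refine sum_congr rfl fun i hi => sum_congr rfl fun a _ => ?_
  exact seqExpect_mul_ipsEst u hk hε hε1 hOLA0 hOLA1 d (mem_range.mp hi)
    (fun ω ω' hωω' => congrArg (OLA · a) (estList_dependsOn k OLA ε u i hωω')) a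

theorem seqExpect_sum_ipsEst (hk : 0 < k) (hε : 0 < ε) (hε1 : ε ≤ 1)
    (hOLA0 : ∀ l a, 0 ≤ OLA l a) (hOLA1 : ∀ l, ∑ a, OLA l a = 1) (d : Fin k) (n : ℕ)
    (a : Fin k) :
    seqExpect (mabDist k OLA ε u) d n (fun ω => ∑ i ∈ range n, ipsEst k OLA ε u ω i a) =
      ∑ i ∈ range n, u i a := by
  rw [seqExpect_sum]
  refine sum_congr rfl fun i hi => ?_
  have := seqExpect_mul_ipsEst u hk hε hε1 hOLA0 hOLA1 d (mem_range.mp hi)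
    (dependsOn_const (1 : ℝ) |>.mono (Set.empty_subset _)) a
  simp only [one_mul] at this
  rw [this, seqExpect_const d (mabDist_dependsOn k OLA ε u) (sum_mabDist k OLA ε u hk.ne' hOLA1)]

theorem mul_sum_OLA_mul_le_sum_mabDist_mul (hε : 0 ≤ ε) (ω : ℕ → Fin k) (i : ℕ)
    (hu0 : ∀ a, 0 ≤ u i a) :
    (1 - ε) * ∑ a, OLA (estList k OLA ε u ω i) a * u i a ≤
      ∑ a, mabDist k OLA ε u ω i a * u i a := by
  rw [mul_sum]
  refine sum_le_sum fun a _ => ?_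
  have := mul_nonneg (div_nonneg hε (Nat.cast_nonneg k)) (hu0 a)
  unfold mabDist
  linarith

theorem mul_seqExpect_sum_OLA_mul_le (hk : 0 < k) (hε : 0 < ε) (hε1 : ε ≤ 1)
    (hOLA0 : ∀ l a, 0 ≤ OLA l a) (d : Fin k) {n : ℕ} (hu0 : ∀ i < n, ∀ a, 0 ≤ u i a) :
    (1 - ε) * seqExpect (mabDist k OLA ε u) d n
        (fun ω => ∑ i ∈ range n, ∑ a, OLA (estList k OLA ε u ω i) a * u i a) ≤
      seqExpect (mabDist k OLA ε u) d n
        (fun ω => ∑ i ∈ range n, ∑ a, mabDist k OLA ε u ω i a * u i a) := by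
  rw [← seqExpect_const_mul]
  refine seqExpect_mono d (fun ω i a => (mabDist_pos u hk hε hε1 hOLA0 ω i a).le) n fun ω => ?_
  rw [mul_sum]
  exact sum_le_sum fun i hi =>
    mul_sum_OLA_mul_le_sum_mabDist_mul u hε.le ω i (hu0 i (mem_range.mp hi))

theorem le_seqExpect_sum_OLA_mul (hk : 0 < k) (hε : 0 < ε) (hε1 : ε ≤ 1)
    (hOLA0 : ∀ l a, 0 ≤ OLA l a) (hOLA1 : ∀ l, ∑ a, OLA l a = 1) (d : Fin k) {n : ℕ} {h R : ℝ}
    (hOLA : ∀ v : ℕ → Fin k → ℝ, (∀ i < n, ∀ a, v i a ∈ Set.Icc 0 (k * h / ε)) →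
      ∀ astar, (1 - ε) * ∑ i ∈ range n, v i astar - R ≤
        ∑ i ∈ range n, ∑ a, OLA ((List.range i).map v) a * v i a)
    (hu : ∀ i < n, ∀ a, u i a ∈ Set.Icc 0 h) (astar : Fin k) :
    (1 - ε) * ∑ i ∈ range n, u i astar - R ≤
      seqExpect (mabDist k OLA ε u) d n
        (fun ω => ∑ i ∈ range n, ∑ a, OLA (estList k OLA ε u ω i) a * u i a) := by
  have hp1 := sum_mabDist k OLA ε u hk.ne' hOLA1
  have hregret (ω : ℕ → Fin k) : (1 - ε) * ∑ i ∈ range n, ipsEst k OLA ε u ω i astar - R ≤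
      ∑ i ∈ range n, ∑ a, OLA (estList k OLA ε u ω i) a * ipsEst k OLA ε u ω i a := by
    simpa only [estList_eq_map] using hOLA (ipsEst k OLA ε u ω)
      (fun i hi => ipsEst_mem_Icc u hk hε hε1 hOLA0 ω i (hu i hi)) astar
  calc (1 - ε) * ∑ i ∈ range n, u i astar - R
      = seqExpect (mabDist k OLA ε u) d n
          (fun ω => (1 - ε) * ∑ i ∈ range n, ipsEst k OLA ε u ω i astar - R) := by
        rw [seqExpect_sub, seqExpect_const_mul, seqExpect_sum_ipsEst u hk hε hε1 hOLA0 hOLA1,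
          seqExpect_const d (mabDist_dependsOn k OLA ε u) hp1]
    _ ≤ _ := seqExpect_mono d (fun ω i a => (mabDist_pos u hk hε hε1 hOLA0 ω i a).le) n hregret
    _ = _ := seqExpect_sum_OLA_mul_ipsEst u hk hε hε1 hOLA0 hOLA1 d n

end BanditReduction

/-- If the full-feedback algorithm `OLA` guarantees
`E[OLA] ≥ (1-ε)·Σ_i ṽ^i_{a*} - (h̃/ε)·ln k` on every input sequence in `[0,h̃]^k`
(with `h̃ = k·h/ε`), then the bandit reduction — mix with uniform exploration,
sample, and feed back propensity-score estimates — satisfies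
`E[MAB] ≥ (1-2ε)·OPT - (h·k/ε²)·ln k` on every true payoff sequence in `[0,h]^k`,
where the expectation is over realized action sequences `ω` (whose probability is the
product of the round-by-round sampling probabilities). -/
theorem bandit_reduction_bound
    (k n : ℕ) (hk : 0 < k) (h ε : ℝ) (hh : 0 < h) (hε : 0 < ε) (hε1 : ε < 1)
    (OLA : List (Fin k → ℝ) → Fin k → ℝ)
    (hOLAdist : ∀ l : List (Fin k → ℝ), (∀ a, 0 ≤ OLA l a) ∧ ∑ a, OLA l a = 1)
    (hOLA : ∀ v : ℕ → Fin k → ℝ,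
        (∀ i < n, ∀ a, v i a ∈ Set.Icc (0 : ℝ) (k * h / ε)) →
        ∀ astar : Fin k,
          ∑ i ∈ Finset.range n, ∑ a, OLA ((List.range i).map v) a * v i a
            ≥ (1 - ε) * ∑ i ∈ Finset.range n, v i astar
              - (k * h / ε) / ε * Real.log k)
    (u : ℕ → Fin k → ℝ) (hu : ∀ i < n, ∀ a, u i a ∈ Set.Icc (0 : ℝ) h) :
    ∑ ω : Fin n → Fin k,
        (∏ i : Fin n,
            mabDist k OLA ε u (fun j => if hj : j < n then ω ⟨j, hj⟩ else ⟨0, hk⟩)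
              i.val (ω i))
          * (∑ i : Fin n, ∑ a : Fin k,
              mabDist k OLA ε u (fun j => if hj : j < n then ω ⟨j, hj⟩ else ⟨0, hk⟩)
                i.val a * u i.val a)
      ≥ (1 - 2 * ε) *
          (Finset.univ.sup' (Finset.univ_nonempty_iff.mpr ⟨⟨0, hk⟩⟩)
            fun a : Fin k => ∑ i ∈ Finset.range n, u i a)
        - (h * k / ε ^ 2) * Real.log k := by
  have hOLA0 : ∀ l a, 0 ≤ OLA l a := fun l => (hOLAdist l).1
  have hOLA1 : ∀ l, ∑ a, OLA l a = 1 := fun l => (hOLAdist l).2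
  obtain ⟨astar, -, hOPT⟩ := exists_mem_eq_sup' (univ_nonempty_iff.mpr ⟨⟨0, hk⟩⟩)
    fun a : Fin k => ∑ i ∈ range n, u i a
  have hexplore := mul_seqExpect_sum_OLA_mul_le u hk hε hε1.le hOLA0 ⟨0, hk⟩
    fun i hi a => (hu i hi a).1
  have hfull := le_seqExpect_sum_OLA_mul u hk hε hε1.le hOLA0 hOLA1 ⟨0, hk⟩ hOLA hu astar
  have hOPT0 : 0 ≤ ∑ i ∈ range n, u i astar :=
    sum_nonneg fun i hi => (hu i (mem_range.mp hi) astar).1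
  have hR0 : 0 ≤ (k * h / ε) / ε * Real.log k := by
    have := Real.log_natCast_nonneg k
    positivity
  have hR : h * k / ε ^ 2 * Real.log k = (k * h / ε) / ε * Real.log k := by field_simp
  have hpayoff (ω : ℕ → Fin k) :=
    Fin.sum_univ_eq_sum_range (fun i => ∑ a, mabDist k OLA ε u ω i a * u i a) n
  show seqExpect (mabDist k OLA ε u) ⟨0, hk⟩ n
    (fun ω => ∑ i : Fin n, ∑ a, mabDist k OLA ε u ω i a * u i a) ≥ _
  simp only [hpayoff, hOPT, hR]
  nlinarith [mul_le_mul_of_nonneg_left hfull (sub_nonneg.mpr hε1.le), mul_nonneg hε.le hR0,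
    mul_nonneg (sq_nonneg ε) hOPT0]
end

section
/- Suppose each of k base online learning algorithms OLA_1, …, OLA_k guarantees per-round best-in-hindsight regret at most r on every input sequence of payoff vectors, i.e., for every deviation action a' and input sequence ṽ^1,…,ṽ^n, Σ_i α̃^i · ṽ^i ≥ Σ_i ṽ^i_{a'} − r·n. Then the Stationary Delegation Algorithm has per-round swap regret at most k·r: for every swap function f : {1,…,k} → {1,…,k} and every payoff sequence v^1,…,v^n, Σ_{i=1}^n α^i · v^i ≥ Σ_{i=1}^n Σ_{a=1}^k α^i_a · v^i_{f(a)} − k·r·n. -/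
/-- Suppose each of `k` base online learning algorithms `OLA a`
(deterministic maps from histories of payoff vectors to mixed strategies over the `k`
actions) guarantees per-round best-in-hindsight regret at most `r` on every input
sequence of payoff vectors in `[0,h]^k`.  Then the Stationary Delegation Algorithm —
which in round `i` plays a stationary distribution `α^i` of the row-stochastic matrix
whose rows are the recommendations of the `OLA a` (each `OLA a` being fed the scaled
payoff vectors `α^{i'}_a · v^{i'}` of the earlier rounds), and feeds `OLA a` the scaled
payoff vector `α^i_a · v^i` — has per-round swap regret at most `k·r`: for every swap
function `f`, `Σ_i α^i · v^i ≥ Σ_i Σ_a α^i_a · v^i_{f(a)} - k·r·n`. -/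
theorem stationary_delegation_swap_regret
    (k n : ℕ) (hk : 0 < k) (h r : ℝ) (hh : 0 < h)
    (OLA : Fin k → List (Fin k → ℝ) → Fin k → ℝ)
    (hOLAdist : ∀ (a : Fin k) (l : List (Fin k → ℝ)),
      (∀ b, 0 ≤ OLA a l b) ∧ ∑ b, OLA a l b = 1)
    (hOLA : ∀ (a : Fin k) (v : ℕ → Fin k → ℝ),
        (∀ i < n, ∀ b, v i b ∈ Set.Icc (0 : ℝ) h) →
        ∀ a' : Fin k,
          ∑ i ∈ Finset.range n, ∑ b, OLA a ((List.range i).map v) b * v i b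
            ≥ ∑ i ∈ Finset.range n, v i a' - r * n)
    (v : Fin n → Fin k → ℝ) (hv : ∀ i b, v i b ∈ Set.Icc (0 : ℝ) h)
    (α : Fin n → Fin k → ℝ)
    (hα0 : ∀ i a, 0 ≤ α i a) (hα1 : ∀ i, ∑ a, α i a = 1)
    (hstat : ∀ (i : Fin n) (b : Fin k),
        ∑ a : Fin k,
            α i a *
              OLA a
                ((List.ofFn fun i' : Fin n => fun c => α i' a * v i' c).take i.val) b
          = α i b) :
    ∀ f : Fin k → Fin k,
      ∑ i : Fin n, ∑ a : Fin k, α i a * v i a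
        ≥ (∑ i : Fin n, ∑ a : Fin k, α i a * v i (f a)) - (k * r) * n := by
  intro f
  -- the fed payoff sequences
  set g : Fin k → ℕ → Fin k → ℝ :=
    fun a i b => if hi : i < n then α ⟨i, hi⟩ a * v ⟨i, hi⟩ b else 0 with hg
  have hα_le1 : ∀ (i : Fin n) (a : Fin k), α i a ≤ 1 := by
    intro i a
    calc α i a ≤ ∑ a', α i a' :=
          Finset.single_le_sum (fun a' _ => hα0 i a') (Finset.mem_univ a)
      _ = 1 := hα1 i
  have hbound : ∀ a, ∀ i < n, ∀ b, g a i b ∈ Set.Icc (0 : ℝ) h := by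
    intro a i hi b
    simp only [hg, dif_pos hi]
    constructor
    · exact mul_nonneg (hα0 _ _) (hv _ _).1
    · calc α ⟨i, hi⟩ a * v ⟨i, hi⟩ b ≤ 1 * h := by
            apply mul_le_mul (hα_le1 _ _) (hv _ _).2 (hv _ _).1 zero_le_one
      _ = h := one_mul h
  have hlist : ∀ (a : Fin k) (i : ℕ), i ≤ n →
      (List.range i).map (g a)
        = (List.ofFn fun i' : Fin n => fun c => α i' a * v i' c).take i := by
    intro a i hi
    apply List.ext_getElem
    · simp [Nat.min_eq_left hi]
    · intro j h1 h2
      have hjn : j < n := lt_of_lt_of_le (by simpa using h1) hi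
      simp [hg, List.getElem_take, List.getElem_ofFn, dif_pos hjn]
  have key : ∀ a : Fin k,
      ∑ i ∈ Finset.range n, ∑ b,
          OLA a ((List.ofFn fun i' : Fin n => fun c => α i' a * v i' c).take i) b * g a i b
        ≥ ∑ i ∈ Finset.range n, g a i (f a) - r * n := by
    intro a
    have H := hOLA a (g a) (hbound a) (f a)
    refine le_trans (le_of_eq rfl) (le_trans H (le_of_eq ?_))
    apply Finset.sum_congr rfl
    intro i hi
    rw [hlist a i (le_of_lt (Finset.mem_range.mp hi))]
  -- sum key over a
  have keysum :
      ∑ a : Fin k, ∑ i ∈ Finset.range n, ∑ b,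
          OLA a ((List.ofFn fun i' : Fin n => fun c => α i' a * v i' c).take i) b * g a i b
        ≥ ∑ a : Fin k, (∑ i ∈ Finset.range n, g a i (f a) - r * n) :=
    Finset.sum_le_sum (fun a _ => key a)
  -- rewrite LHS of keysum
  have hLHS :
      ∑ a : Fin k, ∑ i ∈ Finset.range n, ∑ b,
          OLA a ((List.ofFn fun i' : Fin n => fun c => α i' a * v i' c).take i) b * g a i b
        = ∑ i : Fin n, ∑ a : Fin k, α i a * v i a := by
    rw [Finset.sum_comm]
    rw [← Fin.sum_univ_eq_sum_range (fun i => ∑ a : Fin k, ∑ b,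
          OLA a ((List.ofFn fun i' : Fin n => fun c => α i' a * v i' c).take i) b * g a i b) n]
    apply Finset.sum_congr rfl
    intro i _
    have : ∀ a b, g a i.val b = α i a * v i b := by
      intro a b; simp [hg, dif_pos i.isLt]
    calc ∑ a : Fin k, ∑ b,
          OLA a ((List.ofFn fun i' : Fin n => fun c => α i' a * v i' c).take i.val) b * g a i.val b
        = ∑ b, ∑ a : Fin k,
            α i a * OLA a ((List.ofFn fun i' : Fin n => fun c => α i' a * v i' c).take i.val) b * v i b := by
          rw [Finset.sum_comm]
          apply Finset.sum_congr rfl; intro b _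
          apply Finset.sum_congr rfl; intro a _
          rw [this a b]; ring
      _ = ∑ b, α i b * v i b := by
          apply Finset.sum_congr rfl; intro b _
          rw [← Finset.sum_mul]
          rw [hstat i b]
      _ = ∑ a, α i a * v i a := rfl
  have hRHS :
      ∑ a : Fin k, (∑ i ∈ Finset.range n, g a i (f a) - r * n)
        = (∑ i : Fin n, ∑ a : Fin k, α i a * v i (f a)) - (k * r) * n := by
    rw [Finset.sum_sub_distrib]
    congr 1
    · rw [Finset.sum_comm]
      rw [← Fin.sum_univ_eq_sum_range (fun i => ∑ a : Fin k, g a i (f a)) n]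
      apply Finset.sum_congr rfl
      intro i _
      apply Finset.sum_congr rfl
      intro a _
      simp [hg, dif_pos i.isLt]
    · simp [Finset.sum_const]
      ring
  rw [hLHS, hRHS] at keysum
  exact keysum
end

section
/- The Stationary Delegation Algorithm instantiated with k copies of the Exponential Weights algorithm (with learning rate tuned as ε = √((ln k)/n)) achieves per-round swap regret at most 2·k·h·√((ln k)/n) on every sequence of payoff vectors in [0,h]^k. -/
/-!
Each copy `a` of Exponential Weights is run on the payoffs `α^i_a v^i`, which lie in `[0, h]`,
so the potential argument gives it regret at most `ε h Σᵢ α^i_a + h ln k / ε` against any fixed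
action, in particular against `f a`. Stationarity of `α^i` says that the payoffs the copies
collect in round `i` add up to exactly the algorithm's payoff `α^i · v^i`. Summing the `k`
regret bounds therefore bounds the swap regret by `ε h n + k h ln k / ε`, which is at most
`2 k h ε n` for `ε = √(ln k / n)`.
-/

open Finset Real

namespace Fin

variable {n : ℕ}

lemma sum_filter_val_lt_succ {M : Type*} [AddCommMonoid M] (F : Fin n → M) {m : ℕ}
    (hm : m < n) :
    ∑ i ∈ univ.filter (fun i : Fin n => i.val < m + 1), F i
      = F ⟨m, hm⟩ + ∑ i ∈ univ.filter (fun i : Fin n => i.val < m), F i := by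
  have hfilter : univ.filter (fun i : Fin n => i.val < m + 1)
      = insert ⟨m, hm⟩ (univ.filter (fun i : Fin n => i.val < m)) := by
    ext i
    simp only [mem_filter, mem_univ, true_and, mem_insert, Fin.ext_iff]
    omega
  rw [hfilter, sum_insert (by simp)]

lemma sum_filter_val_lt_eq_sum {M : Type*} [AddCommMonoid M] (F : Fin n → M) :
    ∑ i ∈ univ.filter (fun i : Fin n => i.val < n), F i = ∑ i, F i := by
  rw [filter_true_of_mem fun i _ => i.isLt]

end Fin

namespace ExpWeights

variable {ι : Type*} {n : ℕ}

def cumGain (g : Fin n → ι → ℝ) (m : ℕ) (c : ι) : ℝ :=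
  ∑ i ∈ univ.filter (fun i : Fin n => i.val < m), g i c

noncomputable def weight (ε h : ℝ) (g : Fin n → ι → ℝ) (m : ℕ) (c : ι) : ℝ :=
  (1 + ε) ^ (cumGain g m c / h)

lemma weight_pos {ε h : ℝ} {g : Fin n → ι → ℝ} (hε : 0 ≤ ε) (m : ℕ) (c : ι) :
    0 < weight ε h g m c :=
  rpow_pos_of_pos (by linarith) _

variable [Fintype ι]

noncomputable def strategy (ε h : ℝ) (g : Fin n → ι → ℝ) (m : ℕ) (c : ι) : ℝ :=
  weight ε h g m c / ∑ c', weight ε h g m c'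

noncomputable def gain (ε h : ℝ) (g : Fin n → ι → ℝ) (i : Fin n) : ℝ :=
  ∑ c, strategy ε h g i c * g i c

variable {ε h : ℝ} {g : Fin n → ι → ℝ}

lemma sum_weight_mul_eq [Nonempty ι] (hε : 0 ≤ ε) (i : Fin n) :
    ∑ c, weight ε h g i c * g i c = (∑ c, weight ε h g i c) * gain ε h g i := by
  have hpos : 0 < ∑ c, weight ε h g i c :=
    sum_pos (fun c _ => weight_pos hε _ c) univ_nonempty
  simp only [gain, strategy, mul_sum]
  refine sum_congr rfl fun c _ => ?_
  field_simp

lemma sum_weight_succ_le [Nonempty ι] (hε : 0 ≤ ε) (hh : 0 < h)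
    (hg : ∀ i c, g i c ∈ Set.Icc 0 h) {m : ℕ} (hm : m < n) :
    ∑ c, weight ε h g (m + 1) c
      ≤ (∑ c, weight ε h g m c) * exp (ε / h * gain ε h g ⟨m, hm⟩) := by
  set i : Fin n := ⟨m, hm⟩
  calc ∑ c, weight ε h g (m + 1) c
      = ∑ c, weight ε h g m c * (1 + ε) ^ (g i c / h) := by
        refine sum_congr rfl fun c _ => ?_
        rw [weight, weight, cumGain, cumGain, Fin.sum_filter_val_lt_succ _ hm, add_div,
          rpow_add (by linarith), mul_comm]
    _ ≤ ∑ c, weight ε h g m c * (1 + g i c / h * ε) := by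
        gcongr with c
        · exact (weight_pos hε m c).le
        · exact rpow_one_add_le_one_add_mul_self (by linarith)
            (div_nonneg (hg i c).1 hh.le) ((div_le_one hh).mpr (hg i c).2)
    _ = (∑ c, weight ε h g m c) * (1 + ε / h * gain ε h g i) := by
        rw [mul_add, mul_one, ← mul_assoc, mul_comm _ (ε / h), mul_assoc,
          ← sum_weight_mul_eq hε i, mul_sum, ← sum_add_distrib]
        exact sum_congr rfl fun c _ => by ring
    _ ≤ (∑ c, weight ε h g m c) * exp (ε / h * gain ε h g i) := by
        gcongr
        · exact sum_nonneg fun c _ => (weight_pos hε m c).le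
        · linarith [add_one_le_exp (ε / h * gain ε h g i)]

lemma sum_weight_le [Nonempty ι] (hε : 0 ≤ ε) (hh : 0 < h)
    (hg : ∀ i c, g i c ∈ Set.Icc 0 h) {m : ℕ} (hm : m ≤ n) :
    ∑ c, weight ε h g m c
      ≤ Fintype.card ι * exp (ε / h * ∑ i ∈ univ.filter (fun i : Fin n => i.val < m),
          gain ε h g i) := by
  induction m with
  | zero => simp [weight, cumGain]
  | succ m ih =>
    calc ∑ c, weight ε h g (m + 1) c
        ≤ (∑ c, weight ε h g m c) * exp (ε / h * gain ε h g ⟨m, hm⟩) :=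
          sum_weight_succ_le hε hh hg hm
      _ ≤ Fintype.card ι * exp (ε / h * ∑ i ∈ univ.filter (fun i : Fin n => i.val < m),
            gain ε h g i) * exp (ε / h * gain ε h g ⟨m, hm⟩) := by
          gcongr
          exact ih (by omega)
      _ = _ := by
          rw [Fin.sum_filter_val_lt_succ _ hm, mul_assoc, ← exp_add]
          ring_nf

lemma mul_one_sub_le_log_one_add (hε : 0 ≤ ε) : ε * (1 - ε) ≤ log (1 + ε) := by
  have hlog := one_sub_inv_le_log_of_pos (x := 1 + ε) (by linarith)
  have hrat : 1 - (1 + ε)⁻¹ = ε / (1 + ε) := by field_simp; ring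
  have hfrac : ε * (1 - ε) ≤ ε / (1 + ε) := by
    rw [le_div_iff₀ (by linarith)]
    nlinarith [pow_nonneg hε 3]
  linarith

theorem regret_le [Nonempty ι] (hε : 0 < ε) (hh : 0 < h)
    (hg : ∀ i c, g i c ∈ Set.Icc 0 h) (b : ι) :
    (1 - ε) * ∑ i, g i b - h * log (Fintype.card ι) / ε ≤ ∑ i, gain ε h g i := by
  set G := ∑ i, g i b
  set Q := ∑ i, gain ε h g i
  have hcard : (0 : ℝ) < Fintype.card ι := by exact_mod_cast Fintype.card_pos
  have hweight : weight ε h g n b ≤ Fintype.card ι * exp (ε / h * Q) := by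
    have hpot := sum_weight_le hε.le hh hg (le_refl n)
    rw [Fin.sum_filter_val_lt_eq_sum] at hpot
    exact (single_le_sum (fun c _ => (weight_pos hε.le n c).le) (mem_univ b)).trans hpot
  have hlog : G / h * log (1 + ε) ≤ log (Fintype.card ι) + ε / h * Q := by
    have := log_le_log (weight_pos hε.le n b) hweight
    rwa [weight, log_rpow (by linarith), log_mul hcard.ne' (exp_ne_zero _), log_exp, cumGain,
      Fin.sum_filter_val_lt_eq_sum] at this
  have hG : 0 ≤ G := sum_nonneg fun i _ => (hg i b).1
  have key : ε * ((1 - ε) * G) ≤ ε * (h * log (Fintype.card ι) / ε + Q) := by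
    calc ε * ((1 - ε) * G) ≤ G * log (1 + ε) := by
          nlinarith [mul_one_sub_le_log_one_add hε.le]
      _ = h * (G / h * log (1 + ε)) := by field_simp
      _ ≤ h * (log (Fintype.card ι) + ε / h * Q) := by gcongr
      _ = ε * (h * log (Fintype.card ι) / ε + Q) := by field_simp
  linarith [le_of_mul_le_mul_left key hε]

end ExpWeights

namespace SDA

open ExpWeights

variable {ι : Type*} [Fintype ι] {n : ℕ}

def copyPayoff (α v : Fin n → ι → ℝ) (a : ι) : Fin n → ι → ℝ :=
  fun i c => α i a * v i c

lemma copyPayoff_mem_Icc {h : ℝ} {α v : Fin n → ι → ℝ} (hv : ∀ i b, v i b ∈ Set.Icc 0 h)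
    (hα0 : ∀ i a, 0 ≤ α i a) (hα1 : ∀ i, ∑ a, α i a = 1) (a : ι) (i : Fin n) (c : ι) :
    copyPayoff α v a i c ∈ Set.Icc 0 h := by
  have hα_le : α i a ≤ 1 := hα1 i ▸ single_le_sum (fun a _ => hα0 i a) (mem_univ a)
  refine ⟨mul_nonneg (hα0 i a) (hv i c).1, ?_⟩
  calc α i a * v i c ≤ 1 * h := mul_le_mul hα_le (hv i c).2 (hv i c).1 zero_le_one
    _ = h := one_mul h

lemma sum_gain_copyPayoff {ε h : ℝ} {α v : Fin n → ι → ℝ} (i : Fin n)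
    (hstat : ∀ b, ∑ a, α i a * strategy ε h (copyPayoff α v a) i b = α i b) :
    ∑ a, gain ε h (copyPayoff α v a) i = ∑ b, α i b * v i b := by
  simp only [gain, copyPayoff]
  rw [sum_comm]
  refine sum_congr rfl fun b _ => ?_
  rw [← hstat b, sum_mul]
  exact sum_congr rfl fun a _ => by ring

theorem swap_regret_le [Nonempty ι] {ε h : ℝ} (hε : 0 < ε) (hh : 0 < h)
    {α v : Fin n → ι → ℝ} (hv : ∀ i b, v i b ∈ Set.Icc 0 h)
    (hα0 : ∀ i a, 0 ≤ α i a) (hα1 : ∀ i, ∑ a, α i a = 1)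
    (hstat : ∀ i b, ∑ a, α i a * strategy ε h (copyPayoff α v a) i b = α i b) (f : ι → ι) :
    ∑ i, ∑ a, α i a * v i (f a) - ∑ i, ∑ a, α i a * v i a
      ≤ ε * h * n + Fintype.card ι * (h * log (Fintype.card ι) / ε) := by
  have hcopy : ∀ a, ∑ i, α i a * v i (f a) - ε * h * ∑ i, α i a
      - h * log (Fintype.card ι) / ε ≤ ∑ i, gain ε h (copyPayoff α v a) i := by
    intro a
    have hregret := regret_le hε hh (copyPayoff_mem_Icc hv hα0 hα1 a) (f a)
    have hbound : ∑ i, α i a * v i (f a) ≤ h * ∑ i, α i a := by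
      rw [mul_sum]
      refine sum_le_sum fun i _ => ?_
      rw [mul_comm h]
      exact mul_le_mul_of_nonneg_left (hv i (f a)).2 (hα0 i a)
    simp only [copyPayoff] at hregret
    nlinarith [mul_le_mul_of_nonneg_left hbound hε.le]
  have hmass : ∑ a, ∑ i, α i a = n := by
    rw [sum_comm]
    simp [hα1]
  have hgain : ∑ a, ∑ i, gain ε h (copyPayoff α v a) i = ∑ i, ∑ a, α i a * v i a := by
    rw [sum_comm]
    exact sum_congr rfl fun i _ => sum_gain_copyPayoff i (hstat i)
  have hswap : ∑ a, ∑ i, α i a * v i (f a) = ∑ i, ∑ a, α i a * v i (f a) := sum_comm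
  have hsum := sum_le_sum fun a (_ : a ∈ univ) => hcopy a
  rw [sum_sub_distrib, sum_sub_distrib, ← mul_sum, hmass, sum_const, card_univ, nsmul_eq_mul,
    hgain, hswap] at hsum
  linarith

end SDA

theorem sda_with_exponential_weights_swap_regret_general
    (k n : ℕ) (hn : 0 < n) (h : ℝ) (hh : 0 < h)
    (ε : ℝ) (hεdef : ε = Real.sqrt (Real.log k / n))
    (v : Fin n → Fin k → ℝ) (hv : ∀ i b, v i b ∈ Set.Icc (0 : ℝ) h)
    (α : Fin n → Fin k → ℝ)
    (hα0 : ∀ i a, 0 ≤ α i a) (hα1 : ∀ i, ∑ a, α i a = 1)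
    (hstat : ∀ (i : Fin n) (b : Fin k),
        ∑ a : Fin k,
            α i a *
              ((1 + ε) ^
                  ((∑ i' ∈ Finset.univ.filter (fun i' : Fin n => i'.val < i.val),
                      α i' a * v i' b) / h)
                / ∑ c : Fin k,
                    (1 + ε) ^
                      ((∑ i' ∈ Finset.univ.filter (fun i' : Fin n => i'.val < i.val),
                          α i' a * v i' c) / h))
          = α i b) :
    ∀ f : Fin k → Fin k,
      ∑ i : Fin n, ∑ a : Fin k, α i a * v i a
        ≥ (∑ i : Fin n, ∑ a : Fin k, α i a * v i (f a))
          - (2 * k * h * Real.sqrt (Real.log k / n)) * n := by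
  intro f
  rcases le_or_gt k 1 with hk1 | hk2
  · have : Subsingleton (Fin k) := Fin.subsingleton_iff_le_one.mpr hk1
    have hf : ∀ a, f a = a := fun a => Subsingleton.elim _ _
    simp only [hf]
    have hpenalty : 0 ≤ 2 * k * h * √(log k / n) * n := by positivity
    linarith
  have : Nonempty (Fin k) := ⟨⟨0, by omega⟩⟩
  have hlog : 0 < log k := log_pos (by exact_mod_cast hk2)
  have hnR : (0 : ℝ) < n := by exact_mod_cast hn
  have hεpos : 0 < ε := hεdef ▸ sqrt_pos.mpr (div_pos hlog hnR)
  -- the tuning `ε = √(ln k / n)` balances the two terms of the regret bound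
  have hεsq : ε ^ 2 * n = log k := by
    rw [hεdef, sq_sqrt (by positivity)]
    field_simp
  have htuned : h * log k / ε = h * ε * n := by
    rw [div_eq_iff hεpos.ne']
    linear_combination (-h) * hεsq
  have hregret := SDA.swap_regret_le hεpos hh hv hα0 hα1 hstat f
  rw [Fintype.card_fin, htuned] at hregret
  have hk : (1 : ℝ) ≤ k := by exact_mod_cast hk2.le
  rw [← hεdef]
  nlinarith [mul_nonneg (sub_nonneg.mpr hk) (mul_nonneg (mul_nonneg hεpos.le hh.le) hnR.le)]

/-- The Stationary Delegation Algorithm instantiated with `k` copies of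
Exponential Weights with learning rate `ε = √((ln k)/n)` — copy `a` is fed the scaled
payoff vectors `α^{i'}_a · v^{i'}`, so its round-`i` recommendation gives action `b`
probability proportional to `(1+ε)^((Σ_{i'<i} α^{i'}_a v^{i'}_b)/h)`, and the algorithm
plays a stationary distribution `α^i` of the matrix of recommendations — achieves
per-round swap regret at most `2·k·h·√((ln k)/n)` on every payoff sequence in
`[0,h]^k`. -/
theorem sda_with_exponential_weights_swap_regret
    (k n : ℕ) (hk : 0 < k) (hn : 0 < n) (h : ℝ) (hh : 0 < h)
    (ε : ℝ) (hεdef : ε = Real.sqrt (Real.log k / n))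
    (v : Fin n → Fin k → ℝ) (hv : ∀ i b, v i b ∈ Set.Icc (0 : ℝ) h)
    (α : Fin n → Fin k → ℝ)
    (hα0 : ∀ i a, 0 ≤ α i a) (hα1 : ∀ i, ∑ a, α i a = 1)
    (hstat : ∀ (i : Fin n) (b : Fin k),
        ∑ a : Fin k,
            α i a *
              ((1 + ε) ^
                  ((∑ i' ∈ Finset.univ.filter (fun i' : Fin n => i'.val < i.val),
                      α i' a * v i' b) / h)
                / ∑ c : Fin k,
                    (1 + ε) ^
                      ((∑ i' ∈ Finset.univ.filter (fun i' : Fin n => i'.val < i.val),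
                          α i' a * v i' c) / h))
          = α i b) :
    ∀ f : Fin k → Fin k,
      ∑ i : Fin n, ∑ a : Fin k, α i a * v i a
        ≥ (∑ i : Fin n, ∑ a : Fin k, α i a * v i (f a))
          - (2 * k * h * Real.sqrt (Real.log k / n)) * n :=
  sda_with_exponential_weights_swap_regret_general k n hn h hh ε hεdef v hv α hα0 hα1 hstat
end

section
/- Consider a finite bimatrix game where the leader plays its Stackelberg mixed strategy x* ∈ Δ(A) independently in every round, and suppose the follower's Stackelberg response b* ∈ B is the unique best response to x* with gap δ > 0, i.e., E_{a∼x*}[U_F(b*,a)] ≥ E_{a∼x*}[U_F(b,a)] + δ for every b ≠ b*. If the follower's expected per-round best-in-hindsight regret over n rounds is at most r, then the expected fraction of rounds in which the follower plays an action other than b* is at most r/δ; consequently, if all payoffs lie in [−h, h], the leader's expected per-round payoff is at least SV − 2h·r/δ, where SV = E_{a∼x*}[U_L(a,b*)] is the Stackelberg value. -/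
/-!
In each round the follower's action has some law `p` on `B`, and the leader's action, independent
of it with law `x*`, makes the expected advantage of `b*` over the action actually played equal to
`∑ b, p b * (v b* - v b) ≥ δ * (1 - p b*)`, where `v b = E_{a∼x*} U_F(b,a)`. Averaged over the
rounds, `δ` times the expected deviation frequency is thus at most the expected regret against the
fixed action `b*`, which is at most `r`. In the same way the leader loses at most `2h` against the
Stackelberg value in each round in which the follower deviates, and nothing in the other rounds.
-/

open MeasureTheory Finset

section Simplex

variable {ι : Type*} [Fintype ι] {p f : ι → ℝ}

lemma abs_sum_mul_le_of_mem_stdSimplex (hp : p ∈ stdSimplex ℝ ι) {h : ℝ} (hf : ∀ i, |f i| ≤ h) :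
    |∑ i, p i * f i| ≤ h :=
  calc |∑ i, p i * f i| ≤ ∑ i, p i * |f i| := by
        simpa only [abs_mul, abs_of_nonneg (hp.1 _)] using
          abs_sum_le_sum_abs (fun i => p i * f i) univ
    _ ≤ ∑ i, p i * h := by gcongr with i; exacts [hp.1 i, hf i]
    _ = h := by rw [← sum_mul, hp.2, one_mul]

variable [DecidableEq ι]

lemma sub_sum_mul_eq_sum_erase (hp : ∑ i, p i = 1) (j : ι) :
    f j - ∑ i, p i * f i = ∑ i ∈ univ.erase j, p i * (f j - f i) := by
  rw [sum_erase _ (by simp)]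
  simp only [mul_sub, sum_sub_distrib, ← sum_mul, hp, one_mul]

lemma one_sub_eq_sum_erase (hp : ∑ i, p i = 1) (j : ι) : 1 - p j = ∑ i ∈ univ.erase j, p i := by
  rw [sum_erase_eq_sub (mem_univ j), hp]

lemma mul_one_sub_le_sub_sum_mul (hp : p ∈ stdSimplex ℝ ι) (j : ι) {c : ℝ}
    (hc : ∀ i, i ≠ j → c ≤ f j - f i) : c * (1 - p j) ≤ f j - ∑ i, p i * f i := by
  rw [sub_sum_mul_eq_sum_erase hp.2, one_sub_eq_sum_erase hp.2, mul_sum]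
  refine sum_le_sum fun i hi => ?_
  rw [mul_comm]
  exact mul_le_mul_of_nonneg_left (hc i (ne_of_mem_erase hi)) (hp.1 i)

lemma sub_sum_mul_le_mul_one_sub (hp : p ∈ stdSimplex ℝ ι) (j : ι) {c : ℝ}
    (hc : ∀ i, i ≠ j → f j - f i ≤ c) : f j - ∑ i, p i * f i ≤ c * (1 - p j) := by
  rw [sub_sum_mul_eq_sum_erase hp.2, one_sub_eq_sum_erase hp.2, mul_sum]
  refine sum_le_sum fun i hi => ?_
  rw [mul_comm c]
  exact mul_le_mul_of_nonneg_left (hc i (ne_of_mem_erase hi)) (hp.1 i)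

end Simplex

lemma Finset.integrable_sup' {Ω ι : Type*} [MeasurableSpace Ω] {μ : Measure Ω} {s : Finset ι}
    (hs : s.Nonempty) {f : ι → Ω → ℝ} (hf : ∀ i ∈ s, Integrable (f i) μ) :
    Integrable (fun ω => s.sup' hs fun i => f i ω) μ := by
  simpa only [← Finset.sup'_apply] using
    sup'_induction hs f (p := (Integrable · μ)) (fun _ h₁ _ h₂ => h₁.sup h₂) hf

lemma integrable_of_eq_zero_of_notMem {Ω : Type*} [MeasurableSpace Ω] {μ : Measure Ω}
    {f : Ω → ℝ} {s : Set Ω} (hs : μ s = 0) (hf : ∀ ω ∉ s, f ω = 0) : Integrable f μ :=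
  (integrable_zero Ω ℝ μ).congr <|
    (measure_eq_zero_iff_ae_notMem.1 hs).mono fun ω hω => (hf ω hω).symm

lemma comp_eq_sum_mul_indicator {Ω α β : Type*} [Fintype β] [DecidableEq β] (f : β → α → ℝ)
    (u : Ω → β) (v : Ω → α) :
    (fun ω => f (u ω) (v ω)) = fun ω => ∑ b, f b (v ω) * (if u ω = b then (1 : ℝ) else 0) := by
  simp

section Round

variable {Ω A B : Type*} [MeasurableSpace Ω] {μ : Measure Ω} [Fintype A] [DecidableEq B]

/-- `α` has law `x` and is independent of `β`, phrased through integrals only: neither `α`, `β`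
nor the test functions `g` need be measurable, and integrability is recovered from the nonzero
values of these integrals (the Bochner integral of a non-integrable function being `0`). -/
def IsIndepWithLaw (μ : Measure Ω) (x : A → ℝ) (α : Ω → A) (β : Ω → B) : Prop :=
  ∀ (b : B) (g : A → ℝ),
    ∫ ω, g (α ω) * (if β ω = b then (1 : ℝ) else 0) ∂μ
      = (∑ a, x a * g a) * μ.real {ω | β ω = b}

namespace IsIndepWithLaw

variable {x : A → ℝ} {α : Ω → A} {β : Ω → B}

theorem integral_indicator (hind : IsIndepWithLaw μ x α β) (hx : ∑ a, x a = 1) (b : B) :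
    ∫ ω, (if β ω = b then (1 : ℝ) else 0) ∂μ = μ.real {ω | β ω = b} := by
  simpa [hx] using hind b 1

theorem integrable_mul_indicator [IsFiniteMeasure μ] (hind : IsIndepWithLaw μ x α β)
    (hx : ∑ a, x a = 1) (b : B) (g : A → ℝ) :
    Integrable (fun ω => g (α ω) * (if β ω = b then (1 : ℝ) else 0)) μ := by
  by_cases hb : μ {ω | β ω = b} = 0
  · exact integrable_of_eq_zero_of_notMem hb fun ω hω => by simp_all
  have of_mean_pos : ∀ g : A → ℝ, 0 < ∑ a, x a * g a →
      Integrable (fun ω => g (α ω) * (if β ω = b then (1 : ℝ) else 0)) μ := fun g hg =>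
    Integrable.of_integral_ne_zero <| by
      rw [hind b g]
      exact mul_ne_zero hg.ne' ((measureReal_ne_zero_iff (measure_ne_top μ _)).2 hb)
  -- `g` is the difference of two test functions with positive mean, whose products with the
  -- indicator have nonzero integrals and are therefore integrable
  set c := 1 + |∑ a, x a * g a|
  have hc : 0 < c := by positivity
  have hshift : 0 < ∑ a, x a * (g a + c) := by
    simp only [mul_add, sum_add_distrib, ← sum_mul, hx, one_mul]
    linarith [neg_abs_le (∑ a, x a * g a)]
  refine ((of_mean_pos _ hshift).sub (of_mean_pos (fun _ => c) ?_)).congr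
    (ae_of_all _ fun ω => by simp only [Pi.sub_apply]; ring)
  simpa [← sum_mul, hx] using hc

variable [Fintype B]

theorem integrable_comp [IsFiniteMeasure μ] (hind : IsIndepWithLaw μ x α β) (hx : ∑ a, x a = 1)
    (f : B → A → ℝ) :
    Integrable (fun ω => f (β ω) (α ω)) μ := by
  rw [comp_eq_sum_mul_indicator f β α]
  exact integrable_finsetSum _ fun b _ => hind.integrable_mul_indicator hx b (f b)

theorem integral_comp [IsFiniteMeasure μ] (hind : IsIndepWithLaw μ x α β) (hx : ∑ a, x a = 1)
    (f : B → A → ℝ) :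
    ∫ ω, f (β ω) (α ω) ∂μ = ∑ b, μ.real {ω | β ω = b} * ∑ a, x a * f b a := by
  rw [comp_eq_sum_mul_indicator f β α,
    integral_finsetSum _ fun b _ => hind.integrable_mul_indicator hx b (f b)]
  refine sum_congr rfl fun b _ => ?_
  rw [hind b (f b), mul_comm]

variable [IsProbabilityMeasure μ]

theorem measureReal_mem_stdSimplex (hind : IsIndepWithLaw μ x α β) (hx : ∑ a, x a = 1) :
    (fun b => μ.real {ω | β ω = b}) ∈ stdSimplex ℝ B :=
  ⟨fun _ => measureReal_nonneg, by simpa [hx] using (hind.integral_comp hx fun _ _ => 1).symm⟩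

theorem integral_comp_fst (hind : IsIndepWithLaw μ x α β) (hx : ∑ a, x a = 1) (g : A → ℝ) :
    ∫ ω, g (α ω) ∂μ = ∑ a, x a * g a := by
  rw [hind.integral_comp hx fun _ => g, ← sum_mul, (hind.measureReal_mem_stdSimplex hx).2,
    one_mul]

end IsIndepWithLaw
end Round

section Rounds

variable {Ω A B : Type*} [MeasurableSpace Ω] {μ : Measure Ω} [IsProbabilityMeasure μ]
  [Fintype A] [Fintype B] [DecidableEq B] {x : A → ℝ} {n : ℕ}
  {act : Fin n → Ω → A} {bb : Fin n → Ω → B}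

theorem integral_card_ne_div (hx : ∑ a, x a = 1)
    (hround : ∀ i, IsIndepWithLaw μ x (act i) (bb i)) (bstar : B) :
    ∫ ω, (#{i | bb i ω ≠ bstar} : ℝ) / n ∂μ = (∑ i, (1 - μ.real {ω | bb i ω = bstar})) / n := by
  have hcard : ∀ ω,
      (#{i | bb i ω ≠ bstar} : ℝ) = ∑ i, (1 - if bb i ω = bstar then (1 : ℝ) else 0) := fun ω => by
    rw [natCast_card_filter]
    exact sum_congr rfl fun i _ => by split_ifs <;> simp_all
  simp_rw [hcard]
  have hind : ∀ i, Integrable (fun ω => if bb i ω = bstar then (1 : ℝ) else 0) μ := fun i =>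
    (hround i).integrable_comp hx fun b _ => if b = bstar then 1 else 0
  rw [integral_div, integral_finsetSum (f := fun i ω => 1 - if bb i ω = bstar then (1 : ℝ) else 0)
    _ fun i _ => (integrable_const 1).sub (hind i)]
  congr 1
  refine sum_congr rfl fun i _ => ?_
  rw [integral_sub (integrable_const 1) (hind i), (hround i).integral_indicator hx, integral_const]
  simp

theorem mul_integral_card_ne_div_le_integral_regret (hx : x ∈ stdSimplex ℝ A)
    (hround : ∀ i, IsIndepWithLaw μ x (act i) (bb i)) [Nonempty B] (UF : B → A → ℝ)
    {bstar : B} {δ : ℝ} (hgap : ∀ b, b ≠ bstar → (∑ a, x a * UF b a) + δ ≤ ∑ a, x a * UF bstar a) :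
    δ * ∫ ω, (#{i | bb i ω ≠ bstar} : ℝ) / n ∂μ ≤
      ∫ ω, ((1 : ℝ) / n) * ((univ.sup' univ_nonempty fun b : B => ∑ i, UF b (act i ω))
        - ∑ i, UF (bb i ω) (act i ω)) ∂μ := by
  set v : B → ℝ := fun b => ∑ a, x a * UF b a
  have hint : ∀ i, Integrable (fun ω => UF bstar (act i ω) - UF (bb i ω) (act i ω)) μ := fun i =>
    ((hround i).integrable_comp hx.2 fun _ => UF bstar).sub ((hround i).integrable_comp hx.2 UF)
  have hadvantage : ∀ i, ∫ ω, UF bstar (act i ω) - UF (bb i ω) (act i ω) ∂μ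
      = v bstar - ∑ b, μ.real {ω | bb i ω = b} * v b := fun i => by
    rw [integral_sub ((hround i).integrable_comp hx.2 fun _ => UF bstar)
      ((hround i).integrable_comp hx.2 UF), (hround i).integral_comp_fst hx.2,
      (hround i).integral_comp hx.2]
  calc δ * ∫ ω, (#{i | bb i ω ≠ bstar} : ℝ) / n ∂μ
      = (∑ i, δ * (1 - μ.real {ω | bb i ω = bstar})) / n := by
        rw [integral_card_ne_div hx.2 hround, ← mul_div_assoc, mul_sum]
    _ ≤ (∑ i, (v bstar - ∑ b, μ.real {ω | bb i ω = b} * v b)) / n := by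
        gcongr with i
        exact mul_one_sub_le_sub_sum_mul ((hround i).measureReal_mem_stdSimplex hx.2) bstar
          fun b hb => by linarith [hgap b hb]
    _ = ∫ ω, ((1 : ℝ) / n) * ∑ i, (UF bstar (act i ω) - UF (bb i ω) (act i ω)) ∂μ := by
        rw [integral_const_mul, integral_finsetSum _ fun i _ => hint i]
        simp only [hadvantage]
        ring
    _ ≤ _ := by
      refine integral_mono ((integrable_finsetSum _ fun i _ => hint i).const_mul _)
        (((univ.integrable_sup' univ_nonempty fun b _ =>
          integrable_finsetSum _ fun i _ => (hround i).integrable_comp hx.2 fun _ => UF b).sub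
          (integrable_finsetSum _ fun i _ => (hround i).integrable_comp hx.2 UF)).const_mul _)
        fun ω => ?_
      gcongr
      rw [sum_sub_distrib]
      gcongr
      exact le_sup' (fun b : B => ∑ i, UF b (act i ω)) (mem_univ bstar)

theorem sub_two_mul_integral_card_ne_div_le (hn : n ≠ 0) (hx : x ∈ stdSimplex ℝ A)
    (hround : ∀ i, IsIndepWithLaw μ x (act i) (bb i)) (UL : A → B → ℝ) {h : ℝ}
    (hUL : ∀ a b, |UL a b| ≤ h) (bstar : B) :
    (∑ a, x a * UL a bstar) - 2 * h * ∫ ω, (#{i | bb i ω ≠ bstar} : ℝ) / n ∂μ ≤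
      ((1 : ℝ) / n) * ∫ ω, (∑ i, UL (act i ω) (bb i ω)) ∂μ := by
  set w : B → ℝ := fun b => ∑ a, x a * UL a b
  have hw : ∀ b, |w b| ≤ h := fun b => abs_sum_mul_le_of_mem_stdSimplex hx fun a => hUL a b
  rw [integral_card_ne_div hx.2 hround,
    integral_finsetSum _ fun i _ => (hround i).integrable_comp hx.2 fun b a => UL a b]
  simp only [(hround _).integral_comp hx.2 fun b a => UL a b]
  calc w bstar - 2 * h * ((∑ i, (1 - μ.real {ω | bb i ω = bstar})) / n)
      = (∑ i, (w bstar - 2 * h * (1 - μ.real {ω | bb i ω = bstar}))) / n := by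
        simp only [sum_sub_distrib, sum_const, card_univ, Fintype.card_fin, nsmul_eq_mul, ← mul_sum]
        field_simp
    _ ≤ (∑ i, ∑ b, μ.real {ω | bb i ω = b} * w b) / n := by
        gcongr with i
        have := sub_sum_mul_le_mul_one_sub (f := w) (c := 2 * h)
          ((hround i).measureReal_mem_stdSimplex hx.2) bstar
          fun b _ => by linarith [abs_le.1 (hw b), abs_le.1 (hw bstar)]
        linarith
    _ = _ := by ring

end Rounds

theorem static_stackelberg_vs_no_regret_follower_general
    (A B : Type*) [Fintype A] [Fintype B] [Nonempty B] [DecidableEq B]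
    {Ω : Type*} [MeasurableSpace Ω] (μ : Measure Ω) [IsProbabilityMeasure μ]
    (n : ℕ) (hn : 0 < n)
    (UL : A → B → ℝ) (UF : B → A → ℝ)
    (x : A → ℝ) (hx0 : ∀ a, 0 ≤ x a) (hx1 : ∑ a, x a = 1)
    (bstar : B) (δ : ℝ) (hδ : 0 < δ)
    (hgap : ∀ b : B, b ≠ bstar →
      ∑ a, x a * UF bstar a ≥ (∑ a, x a * UF b a) + δ)
    (h r : ℝ) (hpay : ∀ a b, |UL a b| ≤ h ∧ |UF b a| ≤ h)
    (act : Fin n → Ω → A) (bb : Fin n → Ω → B)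
    -- in each round, the leader's action is distributed as `x*`, independently of the
    -- follower's action in that round
    (hdist : ∀ (i : Fin n) (b : B) (g : A → ℝ),
      ∫ ω, g (act i ω) * (if bb i ω = b then (1 : ℝ) else 0) ∂μ
        = (∑ a, x a * g a) * (μ {ω | bb i ω = b}).toReal)
    -- the follower's expected per-round best-in-hindsight regret is at most `r`
    (hreg : ∫ ω,
        ((1 : ℝ) / n) *
          ((Finset.univ.sup' Finset.univ_nonempty fun b : B => ∑ i, UF b (act i ω))
            - ∑ i, UF (bb i ω) (act i ω)) ∂μ ≤ r) :
    (∫ ω, ((Finset.univ.filter fun i : Fin n => bb i ω ≠ bstar).card : ℝ) / n ∂μ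
        ≤ r / δ)
    ∧ ((1 : ℝ) / n) * ∫ ω, (∑ i, UL (act i ω) (bb i ω)) ∂μ
        ≥ (∑ a, x a * UL a bstar) - 2 * h * r / δ := by
  have hx : x ∈ stdSimplex ℝ A := ⟨hx0, hx1⟩
  have hround : ∀ i, IsIndepWithLaw μ x (act i) (bb i) := hdist
  have hfreq : ∫ ω, (#{i | bb i ω ≠ bstar} : ℝ) / n ∂μ ≤ r / δ := by
    rw [le_div_iff₀ hδ, mul_comm]
    exact (mul_integral_card_ne_div_le_integral_regret hx hround UF hgap).trans hreg
  have hh : 0 ≤ h :=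
    (abs_nonneg _).trans (abs_sum_mul_le_of_mem_stdSimplex hx fun a => (hpay a bstar).1)
  refine ⟨hfreq, ?_⟩
  calc (∑ a, x a * UL a bstar) - 2 * h * r / δ
      = (∑ a, x a * UL a bstar) - 2 * h * (r / δ) := by ring
    _ ≤ (∑ a, x a * UL a bstar) - 2 * h * ∫ ω, (#{i | bb i ω ≠ bstar} : ℝ) / n ∂μ := by gcongr
    _ ≤ _ := sub_two_mul_integral_card_ne_div_le hn.ne' hx hround UL (fun a b => (hpay a b).1) bstar

/-- Suppose the leader plays its Stackelberg mixed strategy `x*`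
independently in every round (so in each round `i`, the leader's action `a^i ∼ x*` is
independent of the follower's simultaneous action `b^i`), and the follower's Stackelberg
response `b*` is the unique best response to `x*` with gap `δ > 0`.  If the follower's
expected per-round best-in-hindsight regret over `n` rounds is at most `r`, then the
expected fraction of rounds in which the follower plays an action other than `b*` is at
most `r/δ`; consequently, if all payoffs lie in `[-h,h]`, the leader's expected
per-round payoff is at least `SV - 2h·r/δ` where `SV = E_{a∼x*}[U_L(a,b*)]`. -/
theorem static_stackelberg_vs_no_regret_follower
    (A B : Type*) [Fintype A] [Fintype B] [Nonempty A] [Nonempty B] [DecidableEq B]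
    [MeasurableSpace A] [MeasurableSpace B]
    {Ω : Type*} [MeasurableSpace Ω] (μ : Measure Ω) [IsProbabilityMeasure μ]
    (n : ℕ) (hn : 0 < n)
    (UL : A → B → ℝ) (UF : B → A → ℝ)
    (x : A → ℝ) (hx0 : ∀ a, 0 ≤ x a) (hx1 : ∑ a, x a = 1)
    (bstar : B) (δ : ℝ) (hδ : 0 < δ)
    (hgap : ∀ b : B, b ≠ bstar →
      ∑ a, x a * UF bstar a ≥ (∑ a, x a * UF b a) + δ)
    (h r : ℝ) (hpay : ∀ a b, |UL a b| ≤ h ∧ |UF b a| ≤ h)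
    (act : Fin n → Ω → A) (bb : Fin n → Ω → B)
    (hma : ∀ i, Measurable (act i)) (hmb : ∀ i, Measurable (bb i))
    -- in each round, the leader's action is distributed as `x*`, independently of the
    -- follower's action in that round
    (hdist : ∀ (i : Fin n) (b : B) (g : A → ℝ),
      ∫ ω, g (act i ω) * (if bb i ω = b then (1 : ℝ) else 0) ∂μ
        = (∑ a, x a * g a) * (μ {ω | bb i ω = b}).toReal)
    -- the follower's expected per-round best-in-hindsight regret is at most `r`
    (hreg : ∫ ω,
        ((1 : ℝ) / n) *
          ((Finset.univ.sup' Finset.univ_nonempty fun b : B => ∑ i, UF b (act i ω))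
            - ∑ i, UF (bb i ω) (act i ω)) ∂μ ≤ r) :
    (∫ ω, ((Finset.univ.filter fun i : Fin n => bb i ω ≠ bstar).card : ℝ) / n ∂μ
        ≤ r / δ)
    ∧ ((1 : ℝ) / n) * ∫ ω, (∑ i, UL (act i ω) (bb i ω)) ∂μ
        ≥ (∑ a, x a * UL a bstar) - 2 * h * r / δ :=
  static_stackelberg_vs_no_regret_follower_general A B μ n hn UL UF x hx0 hx1 bstar δ hδ hgap h r
    hpay act bb hdist hreg
end

section
/- In the 2×3 bimatrix game with leader actions {Up, Down}, follower actions {Left, Mid, Right}, leader payoffs U_L(Up,·) = (0,−2,−2), U_L(Down,·) = (0,−2,2), and follower payoffs U_F(·,Up) = (ε,−1,0), U_F(·,Down) = (−1,1,0) for a fixed ε ∈ (0,1): (i) the Stackelberg value of the leader is 0; and (ii) if the follower runs Follow the Leader (in each round playing the action with highest cumulative follower payoff so far, ties broken in favor of Left) and the leader plays Up for the first m rounds and Down for the last m rounds (n = 2m), then the leader's total payoff is at least 2·(1−ε)·m − c for an absolute constant c, so the leader's per-round payoff approaches (1−ε)·1 > 0 as m → ∞, strictly exceeding the Stackelberg value.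 -/
/-!
Committing to Up makes Left the follower's best response, so the leader secures 0; conversely
Mid costs the leader 2, and Right is a best response only when the leader puts at most as much
weight on Down as on Up, which makes the leader's payoff `2 (x Down - x Up) ≤ 0`.

Against Follow the Leader, the `m` Up rounds give Left a cumulative lead of `mε` over Right and
leave Mid `m` behind. After the switch to Down, Left keeps the lead for `⌊mε⌋₊` more rounds,
and from then on Right is the unique leader (Mid never catches up within `m` Down rounds), so the
leader collects `2` in each of the last `m - ⌊mε⌋₊ - 1 ≥ (1 - ε) m - 1` rounds.
-/

/-- Leader payoffs: rows Up/Down, columns Left/Mid/Right;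
`U_L(Up,·) = (0,−2,−2)`, `U_L(Down,·) = (0,−2,2)`. -/
noncomputable def ULgame : Fin 2 → Fin 3 → ℝ := fun a b => !![0, -2, -2; 0, -2, 2] a b

/-- Follower payoffs: rows Left/Mid/Right, columns Up/Down;
`U_F(·,Up) = (ε,−1,0)`, `U_F(·,Down) = (−1,1,0)`. -/
noncomputable def UFgame (ε : ℝ) : Fin 3 → Fin 2 → ℝ := fun b a => !![ε, -1; -1, 1; 0, 0] b a

/-- The leader's manipulation sequence: Up (action `0`) for the first `m` rounds, then
Down (action `1`) for the last `m` rounds. -/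
def leadSeq (m : ℕ) : Fin (2 * m) → Fin 2 := fun i => if i.val < m then 0 else 1

/-- The follower's cumulative payoff of action `b'` against the leader's manipulation
sequence, over the rounds before round `i`. -/
noncomputable def cumFollower (ε : ℝ) (m : ℕ) (i : Fin (2 * m)) (b' : Fin 3) : ℝ :=
  ∑ i' ∈ Finset.univ.filter (fun i' : Fin (2 * m) => i'.val < i.val),
    UFgame ε b' (leadSeq m i')

lemma leaderPayoff_nonpos_of_isBestResponse {ε : ℝ} {x : Fin 2 → ℝ} (hx : ∀ a, 0 ≤ x a)
    {b : Fin 3} (hbr : ∀ b', ∑ a, x a * UFgame ε b' a ≤ ∑ a, x a * UFgame ε b a) :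
    ∑ a, x a * ULgame a b ≤ 0 := by
  simp only [Fin.sum_univ_two] at hbr ⊢
  have hUp := hx 0
  have hDown := hx 1
  match b with
  | 0 => show x 0 * 0 + x 1 * 0 ≤ 0; simp
  | 1 => show x 0 * -2 + x 1 * -2 ≤ 0; linarith
  | 2 =>
    have hmid : x 0 * -1 + x 1 * 1 ≤ x 0 * 0 + x 1 * 0 := hbr 1
    show x 0 * -2 + x 1 * 2 ≤ 0; linarith

lemma left_isBestResponse_up {ε : ℝ} (hε : 0 ≤ ε) (b' : Fin 3) :
    ∑ a, ![1, 0] a * UFgame ε b' a ≤ ∑ a, ![1, 0] a * UFgame ε 0 a := by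
  simp only [Fin.sum_univ_two]
  match b' with
  | 0 => exact le_rfl
  | 1 => show 1 * -1 + 0 * 1 ≤ 1 * ε + 0 * -1; linarith
  | 2 => show 1 * 0 + 0 * 0 ≤ 1 * ε + 0 * -1; linarith

open Finset

lemma cumFollower_eq (ε : ℝ) (m : ℕ) (i : Fin (2 * m)) (b' : Fin 3) :
    cumFollower ε m i b' =
      (min i.val m : ℕ) * UFgame ε b' 0 + (i.val - m : ℕ) * UFgame ε b' 1 := by
  have hpast : #{i' : Fin (2 * m) | i'.val < i.val} = i.val := by
    rw [Fin.card_filter_val_lt]; exact min_eq_right i.isLt.le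
  have hUp : #{i' : Fin (2 * m) | i'.val < i.val ∧ i'.val < m} = min i.val m := by
    simp_rw [← lt_min_iff, Fin.card_filter_val_lt]
    omega
  have hDown : #{i' : Fin (2 * m) | i'.val < i.val ∧ ¬ i'.val < m} = i.val - m := by
    have := card_filter_add_card_filter_not (s := {i' : Fin (2 * m) | i'.val < i.val})
      (fun i' => i'.val < m)
    simp only [filter_filter, hpast, hUp] at this
    omega
  simp only [cumFollower, leadSeq, apply_ite (UFgame ε b'), sum_ite, sum_const, filter_filter,
    nsmul_eq_mul, hUp, hDown]

lemma cumFollower_zero (ε : ℝ) (m : ℕ) (i : Fin (2 * m)) :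
    cumFollower ε m i 0 = (min i.val m : ℕ) * ε - (i.val - m : ℕ) := by
  rw [cumFollower_eq]
  change _ * ε + _ * -1 = _
  ring

lemma cumFollower_one (ε : ℝ) (m : ℕ) (i : Fin (2 * m)) :
    cumFollower ε m i 1 = (i.val - m : ℕ) - (min i.val m : ℕ) := by
  rw [cumFollower_eq]
  change _ * -1 + _ * 1 = _
  ring

lemma cumFollower_two (ε : ℝ) (m : ℕ) (i : Fin (2 * m)) : cumFollower ε m i 2 = 0 := by
  rw [cumFollower_eq]
  change _ * 0 + _ * 0 = _
  ring

section FollowTheLeader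

variable {ε : ℝ} {m : ℕ} {i : Fin (2 * m)} {a : Fin 3}

lemma followLeader_eq_zero
    (htie : (∀ b', cumFollower ε m i b' ≤ cumFollower ε m i 0) → a = 0)
    (hbehind : ((i.val - m : ℕ) : ℝ) ≤ (min i.val m : ℕ) * ε) : a = 0 := by
  have hd : ((i.val - m : ℕ) : ℝ) ≤ (min i.val m : ℕ) := by
    have := i.isLt
    exact_mod_cast (by omega : i.val - m ≤ min i.val m)
  apply htie
  intro
  | 0 => rfl
  | 1 => rw [cumFollower_one, cumFollower_zero]; linarith
  | 2 => rw [cumFollower_two, cumFollower_zero]; linarith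

lemma followLeader_eq_two (hε : 0 ≤ ε)
    (hbest : ∀ b', cumFollower ε m i b' ≤ cumFollower ε m i a)
    (hahead : (min i.val m : ℕ) * ε < ((i.val - m : ℕ) : ℝ)) : a = 2 := by
  have hdown : m < i.val := by
    by_contra! h
    rw [Nat.sub_eq_zero_of_le h, Nat.cast_zero] at hahead
    exact hahead.not_ge (by positivity)
  have hd : ((i.val - m : ℕ) : ℝ) < (min i.val m : ℕ) := by
    have := i.isLt
    exact_mod_cast (by omega : i.val - m < min i.val m)
  have hright := hbest 2
  rw [cumFollower_two] at hright
  match a with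
  | 0 => rw [cumFollower_zero] at hright; linarith
  | 1 => rw [cumFollower_one] at hright; linarith
  | 2 => rfl

lemma followLeader_eq_ite (hε : 0 ≤ ε)
    (hbest : ∀ b', cumFollower ε m i b' ≤ cumFollower ε m i a)
    (htie : (∀ b', cumFollower ε m i b' ≤ cumFollower ε m i 0) → a = 0) :
    a = if m + ⌊m * ε⌋₊ < i.val then 2 else 0 := by
  have hfloor : (⌊m * ε⌋₊ : ℝ) ≤ m * ε := Nat.floor_le (by positivity)
  split_ifs with h
  · refine followLeader_eq_two hε hbest ?_
    rw [show min i.val m = m by omega]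
    exact Nat.lt_of_floor_lt (by omega)
  · refine followLeader_eq_zero htie ?_
    rcases le_total i.val m with hup | hdown
    · rw [Nat.sub_eq_zero_of_le hup, Nat.cast_zero]; positivity
    · rw [show min i.val m = m by omega]
      exact le_trans (by exact_mod_cast (by omega : i.val - m ≤ ⌊m * ε⌋₊)) hfloor

end FollowTheLeader

lemma ULgame_leadSeq_ite (m t : ℕ) (i : Fin (2 * m)) :
    ULgame (leadSeq m i) (if m + t < i.val then 2 else 0) = if m + t < i.val then 2 else 0 := by
  unfold leadSeq
  split_ifs <;> first | rfl | omega

lemma sum_ite_lt_val (n k : ℕ) (c : ℝ) :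
    ∑ i : Fin n, (if k < i.val then c else 0) = (n - (k + 1) : ℕ) * c := by
  rw [Fin.sum_univ_eq_sum_range (fun j => if k < j then c else 0), sum_ite, sum_const_zero,
    add_zero, sum_const, nsmul_eq_mul]
  congr
  rw [← Nat.sub_sub, ← Nat.card_Ioo k n]
  congr 1
  ext j
  simp only [mem_filter, mem_range, mem_Ioo]
  omega

theorem mean_based_learners_are_manipulable_general
    (ε : ℝ) (hε : 0 < ε) :
    IsGreatest
      {v : ℝ | ∃ x : Fin 2 → ℝ, (∀ a, 0 ≤ x a) ∧ (∑ a, x a = 1) ∧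
        ∃ b : Fin 3,
          (∀ b' : Fin 3, ∑ a, x a * UFgame ε b' a ≤ ∑ a, x a * UFgame ε b a) ∧
          v = ∑ a, x a * ULgame a b} 0
    ∧ ∃ c : ℝ, ∀ (m : ℕ) (b : Fin (2 * m) → Fin 3),
        (∀ i : Fin (2 * m),
          (∀ b' : Fin 3, cumFollower ε m i b' ≤ cumFollower ε m i (b i)) ∧
          ((∀ b' : Fin 3, cumFollower ε m i b' ≤ cumFollower ε m i 0) → b i = 0)) →
        ∑ i : Fin (2 * m), ULgame (leadSeq m i) (b i) ≥ 2 * (1 - ε) * m - c := by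
  refine ⟨⟨⟨![1, 0], ?_, by simp, 0, left_isBestResponse_up hε.le, by simp [ULgame]⟩, ?_⟩,
    2, fun m b hb => ?_⟩
  · intro a; fin_cases a <;> simp
  · rintro v ⟨x, hx, -, b, hbr, rfl⟩
    exact leaderPayoff_nonpos_of_isBestResponse hx hbr
  have hplay (i : Fin (2 * m)) := followLeader_eq_ite hε.le (hb i).1 (hb i).2
  simp only [hplay, ULgame_leadSeq_ite, sum_ite_lt_val]
  have hfloor : (⌊m * ε⌋₊ : ℝ) ≤ m * ε := Nat.floor_le (by positivity)
  have hcount : (2 * m : ℝ) ≤ ((2 * m - (m + ⌊m * ε⌋₊ + 1) : ℕ) : ℝ) + (m + ⌊m * ε⌋₊ + 1) := by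
    exact_mod_cast le_tsub_add
  linarith

/-- In the 2×3 game above with `ε ∈ (0,1)`:
(i) the leader's Stackelberg value is `0` (the maximum, over leader mixed strategies `x`
and follower best responses `b` to `x`, of the leader's expected payoff); and
(ii) against a Follow-the-Leader follower (playing an action with highest cumulative
follower payoff so far, ties broken in favor of Left) the Up-then-Down leader obtains
total payoff at least `2·(1−ε)·m − c` for an absolute constant `c`. -/
theorem mean_based_learners_are_manipulable
    (ε : ℝ) (hε : 0 < ε) (hε1 : ε < 1) :
    IsGreatest
      {v : ℝ | ∃ x : Fin 2 → ℝ, (∀ a, 0 ≤ x a) ∧ (∑ a, x a = 1) ∧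
        ∃ b : Fin 3,
          (∀ b' : Fin 3, ∑ a, x a * UFgame ε b' a ≤ ∑ a, x a * UFgame ε b a) ∧
          v = ∑ a, x a * ULgame a b} 0
    ∧ ∃ c : ℝ, ∀ (m : ℕ) (b : Fin (2 * m) → Fin 3),
        (∀ i : Fin (2 * m),
          (∀ b' : Fin 3, cumFollower ε m i b' ≤ cumFollower ε m i (b i)) ∧
          ((∀ b' : Fin 3, cumFollower ε m i b' ≤ cumFollower ε m i 0) → b i = 0)) →
        ∑ i : Fin (2 * m), ULgame (leadSeq m i) (b i) ≥ 2 * (1 - ε) * m - c :=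
  mean_based_learners_are_manipulable_general ε hε
end

section
/- For any finite bimatrix game with bounded payoffs, there exists a constant C ≥ 0 such that for every follower action b and every regret tolerance r ≥ 0 for which b is forceable with regret at most r, the optimistic Stackelberg value satisfies OSV(b,r) ≤ SV + C·r, where SV is the Stackelberg value of the game. -/
/-!
Fix the follower action `b`. By definition of `SV`, the linear program maximizing the leader's
payoff `x ⬝ᵥ UL(·, b)` over mixed strategies `x` to which `b` is a best response has value at most
`SV`. Farkas' lemma turns this into dual multipliers `μ ≥ 0` with
`UL(a, b) + ∑ b', μ b' * (UF(b, a) - UF(b', a)) ≤ SV` for every leader action `a`. Averaging this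
over a mixed strategy `x` against which `b` has regret at most `r` bounds the leader's payoff by
`SV + (∑ b', μ b') * r`.

Farkas' lemma follows from the separation theorem for closed convex cones; a finitely generated
cone is closed because, by the conic Carathéodory theorem, it is a finite union of images of
closed orthants under injective linear maps.
-/

open Finset

section ConicCaratheodory

variable {ι V : Type*} [AddCommGroup V] [Module ℝ V] {v : ι → V}

lemma exists_nonneg_sum_erase_eq_of_sum_eq_zero [DecidableEq ι] {s : Finset ι} {μ g : ι → ℝ}
    (hμ : ∀ i ∈ s, 0 ≤ μ i) (hg : ∑ i ∈ s, g i • v i = 0) {j : ι} (hjs : j ∈ s)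
    (hgj : g j ≠ 0) :
    ∃ i₀ ∈ s, ∃ ν : ι → ℝ, (∀ i ∈ s, 0 ≤ ν i) ∧
      ∑ i ∈ s.erase i₀, ν i • v i = ∑ i ∈ s, μ i • v i := by
  wlog hgj_pos : 0 < g j generalizing g
  · exact this (g := -g) (by simp [hg]) (neg_ne_zero.2 hgj)
      (neg_pos.2 (lt_of_le_of_ne (not_lt.1 hgj_pos) hgj))
  -- Move from `μ` along `-g` until the first coefficient vanishes.
  obtain ⟨i₀, hi₀, hmin⟩ := (s.filter (0 < g ·)).exists_min_image (fun i => μ i / g i)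
    ⟨j, mem_filter.2 ⟨hjs, hgj_pos⟩⟩
  obtain ⟨hi₀s, hgi₀⟩ := mem_filter.1 hi₀
  set τ := μ i₀ / g i₀
  have hτ : 0 ≤ τ := div_nonneg (hμ i₀ hi₀s) hgi₀.le
  refine ⟨i₀, hi₀s, fun i => μ i - τ * g i, fun i hi => ?_, ?_⟩
  · rcases lt_or_ge 0 (g i) with hgi | hgi
    · have := hmin i (mem_filter.2 ⟨hi, hgi⟩)
      rw [le_div_iff₀ hgi] at this
      linarith
    · nlinarith [hμ i hi]
  · have hν₀ : (μ i₀ - τ * g i₀) • v i₀ = 0 := by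
      rw [div_mul_cancel₀ _ hgi₀.ne', sub_self, zero_smul]
    rw [sum_erase s (f := fun i => (μ i - τ * g i) • v i) hν₀]
    simp only [sub_smul, sum_sub_distrib, ← smul_smul, ← smul_sum, hg, smul_zero, sub_zero]

lemma exists_linearIndepOn_nonneg_sum_eq (s : Finset ι) (μ : ι → ℝ) (hμ : ∀ i ∈ s, 0 ≤ μ i) :
    ∃ t ⊆ s, LinearIndepOn ℝ v (t : Set ι) ∧ ∃ ν : ι → ℝ, (∀ i ∈ t, 0 ≤ ν i) ∧
      ∑ i ∈ t, ν i • v i = ∑ i ∈ s, μ i • v i := by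
  classical
  induction s using Finset.strongInduction generalizing μ with
  | _ s ih =>
    by_cases hs : LinearIndepOn ℝ v (s : Set ι)
    · exact ⟨s, subset_rfl, hs, μ, hμ, rfl⟩
    obtain ⟨g, hg, j, hjs, hgj⟩ := not_linearIndepOn_finset_iff.1 hs
    obtain ⟨i₀, hi₀, ν, hν, hsum⟩ := exists_nonneg_sum_erase_eq_of_sum_eq_zero hμ hg hjs hgj
    obtain ⟨t, hts, ht, ρ, hρ, hρsum⟩ :=
      ih _ (erase_ssubset hi₀) ν fun i hi => hν i (mem_of_mem_erase hi)
    exact ⟨t, hts.trans (erase_subset _ _), ht, ρ, hρ, hρsum.trans hsum⟩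

end ConicCaratheodory

section FinitelyGeneratedCone

variable {ι E : Type*} [Fintype ι] [AddCommGroup E] [Module ℝ E]

lemma PointedCone.mem_hull_range_iff_exists_nonneg {v : ι → E} {x : E} :
    x ∈ PointedCone.hull ℝ (Set.range v) ↔ ∃ μ : ι → ℝ, 0 ≤ μ ∧ ∑ i, μ i • v i = x := by
  rw [Submodule.mem_span_range_iff_exists_fun]
  constructor
  · rintro ⟨c, rfl⟩
    exact ⟨fun i => c i, fun i => (c i).2, by simp⟩
  · rintro ⟨μ, hμ, rfl⟩
    exact ⟨fun i => ⟨μ i, hμ i⟩, by simp⟩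

variable [TopologicalSpace E] [IsTopologicalAddGroup E] [ContinuousSMul ℝ E] [T2Space E]

lemma LinearIndependent.isClosed_image_nonneg {w : ι → E} (hw : LinearIndependent ℝ w) :
    IsClosed (Fintype.linearCombination ℝ w '' Set.Ici 0) :=
  (LinearMap.isClosedEmbedding_of_injective (LinearMap.ker_eq_bot.2
    hw.fintypeLinearCombination_injective)).isClosedMap _ isClosed_Ici

lemma PointedCone.isClosed_hull_range (v : ι → E) :
    IsClosed (PointedCone.hull ℝ (Set.range v) : Set E) := by
  classical
  have hunion : (PointedCone.hull ℝ (Set.range v) : Set E) =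
      ⋃ t : {t : Finset ι // LinearIndepOn ℝ v (t : Set ι)},
        Fintype.linearCombination ℝ (fun i : (t.1 : Set ι) => v i) '' Set.Ici 0 := by
    ext x
    simp only [SetLike.mem_coe, mem_hull_range_iff_exists_nonneg, Set.mem_iUnion, Set.mem_image,
      Set.mem_Ici, Fintype.linearCombination_apply]
    constructor
    · rintro ⟨μ, hμ, rfl⟩
      obtain ⟨t, -, ht, ν, hν, hsum⟩ :=
        exists_linearIndepOn_nonneg_sum_eq (v := v) univ μ fun i _ => hμ i
      exact ⟨⟨t, ht⟩, fun i => ν i, fun i => hν i i.2, (sum_coe_sort t _).trans hsum⟩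
    · rintro ⟨⟨t, _⟩, ν, hν, rfl⟩
      set μ : ι → ℝ := fun i => if h : i ∈ t then ν ⟨i, h⟩ else 0
      refine ⟨μ, fun i => ?_, ?_⟩
      · by_cases h : i ∈ t
        · simpa [μ, h] using hν ⟨i, h⟩
        · simp [μ, h]
      · calc ∑ i, μ i • v i = ∑ i ∈ t, μ i • v i :=
              (sum_subset (subset_univ t) fun i _ hi => by simp [μ, hi]).symm
          _ = ∑ i : t, μ i • v i := (sum_coe_sort t _).symm
          _ = _ := by simp [μ]
  rw [hunion]
  exact isClosed_iUnion_of_finite fun t => LinearIndependent.isClosed_image_nonneg t.2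

end FinitelyGeneratedCone

lemma LinearMap.apply_eq_dotProduct_single {R n : Type*} [CommSemiring R] [Fintype n]
    [DecidableEq n] (f : (n → R) →ₗ[R] R) (y : n → R) :
    f y = (fun a => f (Pi.single a 1)) ⬝ᵥ y := by
  rw [dotProduct_comm]
  conv_lhs => rw [← univ_sum_single y, map_sum]
  refine sum_congr rfl fun a _ => ?_
  rw [← smul_eq_mul, ← map_smul, ← Pi.single_smul', smul_eq_mul, mul_one]

section Farkas

variable {ι n : Type*} [Fintype ι] [Fintype n]

theorem exists_nonneg_sum_smul_eq_of_forall_dotProduct_nonneg (v : ι → n → ℝ) (c : n → ℝ)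
    (h : ∀ z : n → ℝ, (∀ i, 0 ≤ z ⬝ᵥ v i) → 0 ≤ z ⬝ᵥ c) :
    ∃ μ : ι → ℝ, 0 ≤ μ ∧ ∑ i, μ i • v i = c := by
  classical
  let K : ProperCone ℝ (n → ℝ) :=
    ⟨PointedCone.hull ℝ (Set.range v), PointedCone.isClosed_hull_range v⟩
  by_contra hc
  obtain ⟨f, hfK, hfc⟩ := K.hyperplane_separation_point
    fun hcK => hc (PointedCone.mem_hull_range_iff_exists_nonneg.1 hcK)
  have hf := LinearMap.apply_eq_dotProduct_single (f : (n → ℝ) →ₗ[ℝ] ℝ)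
  simp only [ContinuousLinearMap.coe_coe] at hf
  have hvz : ∀ i, 0 ≤ (fun a => f (Pi.single a 1)) ⬝ᵥ v i :=
    fun i => hf (v i) ▸ hfK _ (PointedCone.subset_hull ⟨i, rfl⟩)
  exact (h _ hvz).not_gt (hf c ▸ hfc)

theorem exists_nonneg_sum_smul_le_of_forall_dotProduct_nonneg (v : ι → n → ℝ) (c : n → ℝ)
    (h : ∀ z : n → ℝ, 0 ≤ z → (∀ i, 0 ≤ z ⬝ᵥ v i) → 0 ≤ z ⬝ᵥ c) :
    ∃ μ : ι → ℝ, 0 ≤ μ ∧ ∑ i, μ i • v i ≤ c := by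
  classical
  -- The coordinate vectors, as extra generators, encode the constraint `0 ≤ z`.
  obtain ⟨μ, hμ, hμc⟩ := exists_nonneg_sum_smul_eq_of_forall_dotProduct_nonneg
    (Sum.elim v fun a => Pi.single a 1) c fun z hz =>
      h z (fun a => by simpa using hz (Sum.inr a)) fun i => hz (Sum.inl i)
  refine ⟨fun i => μ (Sum.inl i), fun i => hμ _, ?_⟩
  rw [← hμc, Fintype.sum_sum_type]
  exact le_add_of_nonneg_right (sum_nonneg fun a _ => smul_nonneg (hμ _) (by simp))

end Farkas

section MixedStrategies

variable {A : Type*} [Fintype A] {x : A → ℝ}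

lemma dotProduct_const_of_mem_stdSimplex (hx : x ∈ stdSimplex ℝ A) (c : ℝ) :
    x ⬝ᵥ (fun _ => c) = c := by
  simp [dotProduct, ← sum_mul, hx.2]

lemma exists_pos_smul_mem_stdSimplex {z : A → ℝ} (hz : 0 ≤ z) (hz₀ : z ≠ 0) :
    ∃ s : ℝ, 0 < s ∧ ∃ x ∈ stdSimplex ℝ A, z = s • x := by
  have hs : 0 < ∑ a, z a := by
    refine lt_of_le_of_ne (sum_nonneg fun a _ => hz a) fun h => hz₀ ?_
    funext a
    exact (sum_eq_zero_iff_of_nonneg fun a _ => hz a).1 h.symm a (mem_univ a)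
  refine ⟨∑ a, z a, hs, (∑ a, z a)⁻¹ • z, ⟨fun a => ?_, ?_⟩, ?_⟩
  · exact mul_nonneg (inv_nonneg.2 hs.le) (hz a)
  · simp [← mul_sum, inv_mul_cancel₀ hs.ne']
  · rw [smul_smul, mul_inv_cancel₀ hs.ne', one_smul]

end MixedStrategies

section Stackelberg

variable {A B : Type*} [Fintype A] [Fintype B] {UL : A → B → ℝ} {UF : B → A → ℝ} {SV : ℝ}

lemma exists_nonneg_regret_multipliers (b : B)
    (hSV : ∀ x ∈ stdSimplex ℝ A, (∀ b', x ⬝ᵥ UF b' ≤ x ⬝ᵥ UF b) → x ⬝ᵥ (UL · b) ≤ SV) :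
    ∃ μ : B → ℝ, 0 ≤ μ ∧ (UL · b) + ∑ b', μ b' • (UF b - UF b') ≤ fun _ => SV := by
  have hdual : ∀ z : A → ℝ, 0 ≤ z → (∀ b', 0 ≤ z ⬝ᵥ (UF b - UF b')) →
      0 ≤ z ⬝ᵥ ((fun _ => SV) - (UL · b)) := by
    intro z hz hbr
    obtain rfl | hz₀ := eq_or_ne z 0
    · simp
    obtain ⟨s, hs, x, hx, rfl⟩ := exists_pos_smul_mem_stdSimplex hz hz₀
    simp only [smul_dotProduct, smul_eq_mul] at hbr ⊢
    have hbest : ∀ b', x ⬝ᵥ UF b' ≤ x ⬝ᵥ UF b := fun b' =>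
      sub_nonneg.1 (dotProduct_sub x _ _ ▸ nonneg_of_mul_nonneg_right (hbr b') hs)
    rw [dotProduct_sub, dotProduct_const_of_mem_stdSimplex hx]
    exact mul_nonneg hs.le (sub_nonneg.2 (hSV x hx hbest))
  obtain ⟨μ, hμ, hμc⟩ := exists_nonneg_sum_smul_le_of_forall_dotProduct_nonneg _ _ hdual
  exact ⟨μ, hμ, le_sub_iff_add_le'.1 hμc⟩

lemma dotProduct_le_add_mul_of_regret_le {b : B} {μ : B → ℝ} (hμ : 0 ≤ μ)
    (hμSV : (UL · b) + ∑ b', μ b' • (UF b - UF b') ≤ fun _ => SV) {x : A → ℝ}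
    (hx : x ∈ stdSimplex ℝ A) {r : ℝ} (hr : ∀ b', x ⬝ᵥ UF b' ≤ x ⬝ᵥ UF b + r) :
    x ⬝ᵥ (UL · b) ≤ SV + (∑ b', μ b') * r := by
  have hle : x ⬝ᵥ ((UL · b) + ∑ b', μ b' • (UF b - UF b')) ≤ SV :=
    (dotProduct_le_dotProduct_of_nonneg_left hμSV hx.1).trans_eq
      (dotProduct_const_of_mem_stdSimplex hx SV)
  have hregret : -((∑ b', μ b') * r) ≤ x ⬝ᵥ ∑ b', μ b' • (UF b - UF b') := by
    rw [dotProduct_sum, sum_mul, ← sum_neg_distrib]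
    refine sum_le_sum fun b' _ => ?_
    rw [dotProduct_smul, dotProduct_sub, smul_eq_mul, ← mul_neg, ← sub_nonneg, ← mul_sub]
    exact mul_nonneg (hμ b') (by linarith [hr b'])
  rw [dotProduct_add] at hle
  linarith

end Stackelberg

theorem optimistic_stackelberg_value_linear_bound_general
    (A B : Type*) [Fintype A] [Fintype B]
    (UL : A → B → ℝ) (UF : B → A → ℝ) (SV : ℝ)
    (hSV : IsLUB
      {v : ℝ | ∃ (b : B) (x : A → ℝ), (∀ a, 0 ≤ x a) ∧ (∑ a, x a = 1) ∧
        (∀ b' : B, ∑ a, x a * UF b' a ≤ ∑ a, x a * UF b a) ∧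
        v = ∑ a, x a * UL a b} SV) :
    ∃ C : ℝ, 0 ≤ C ∧
      ∀ (b : B) (r : ℝ), 0 ≤ r →
        ∀ x : A → ℝ, (∀ a, 0 ≤ x a) → (∑ a, x a = 1) →
          (∀ b' : B, ∑ a, x a * UF b' a ≤ (∑ a, x a * UF b a) + r) →
          ∑ a, x a * UL a b ≤ SV + C * r := by
  choose μ hμ hμSV using fun b => exists_nonneg_regret_multipliers (UL := UL) b
    fun x hx hbest => hSV.1 ⟨b, x, hx.1, hx.2, hbest, rfl⟩
  have hμsum : ∀ b, 0 ≤ ∑ b', μ b b' := fun b => sum_nonneg fun b' _ => hμ b b'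
  refine ⟨∑ b, ∑ b', μ b b', sum_nonneg fun b _ => hμsum b, ?_⟩
  intro b r hr x hx₀ hx₁ hregret
  calc ∑ a, x a * UL a b ≤ SV + (∑ b', μ b b') * r :=
        dotProduct_le_add_mul_of_regret_le (hμ b) (hμSV b) ⟨hx₀, hx₁⟩ hregret
    _ ≤ SV + (∑ b, ∑ b', μ b b') * r := by
        gcongr SV + ?_ * r
        exact single_le_sum (fun b _ => hμsum b) (mem_univ b)

/-- For any finite bimatrix game (payoffs are automatically bounded),
there is a constant `C ≥ 0` such that for every follower action `b` and every regret
tolerance `r ≥ 0` for which `b` is forceable with regret at most `r`, the optimistic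
Stackelberg value satisfies `OSV(b,r) ≤ SV + C·r`: every leader mixed strategy `x` for
which `b` is an `r`-approximate best response yields leader payoff at most `SV + C·r`.
Here `SV` is the Stackelberg value, i.e. the least upper bound of the leader's payoffs
over pairs `(x, b)` where `b` is an (exact) best response to `x`. -/
theorem optimistic_stackelberg_value_linear_bound
    (A B : Type*) [Fintype A] [Fintype B] [Nonempty A] [Nonempty B]
    (UL : A → B → ℝ) (UF : B → A → ℝ) (SV : ℝ)
    (hSV : IsLUB
      {v : ℝ | ∃ (b : B) (x : A → ℝ), (∀ a, 0 ≤ x a) ∧ (∑ a, x a = 1) ∧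
        (∀ b' : B, ∑ a, x a * UF b' a ≤ ∑ a, x a * UF b a) ∧
        v = ∑ a, x a * UL a b} SV) :
    ∃ C : ℝ, 0 ≤ C ∧
      ∀ (b : B) (r : ℝ), 0 ≤ r →
        ∀ x : A → ℝ, (∀ a, 0 ≤ x a) → (∑ a, x a = 1) →
          (∀ b' : B, ∑ a, x a * UF b' a ≤ (∑ a, x a * UF b a) + r) →
          ∑ a, x a * UL a b ≤ SV + C * r :=
  optimistic_stackelberg_value_linear_bound_general A B UL UF SV hSV
end
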